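/- arXiv:1102.5335 — 9 statements merged into one kernel-verified Lean document; each statement's English description precedes it below -/
import Mathlib

section
/- The number of r-tuples of monic polynomials of degree n over the finite field F_q whose gcd is 1 equals q^{rn} - q^{r(n-1)+1}, where r ≥ 2 and n ≥ 1. -/
/-!
Every tuple of monic polynomials of degree `n` factors uniquely as `d • w`, where `d` is its gcd,
monic of some degree `k ≤ n`, and `w` is a coprime tuple of monic polynomials of degree `n - k`.
Writing `c j` for the number of coprime `r`-tuples of degree `j`, counting gives
`q ^ (r * n) = ∑ k ∈ range (n + 1), q ^ k * c (n - k)`. The terms with `k ≥ 1` add up to `q` times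
the same identity in degree `n - 1`, so `c n = q ^ (r * n) - q * q ^ (r * (n - 1))`.
-/

open Polynomial

theorem Finset.span_image_eq_span_gcd {R ι : Type*} [CommRing R] [IsDomain R] [IsBezout R]
    [NormalizedGCDMonoid R] (s : Finset ι) (f : ι → R) :
    Ideal.span (f '' s) = Ideal.span {s.gcd f} := by
  classical
  induction s using Finset.induction_on with
  | empty => simp
  | insert i s _ ih =>
    rw [Finset.gcd_insert, span_gcd, Ideal.span_insert, ← ih, ← Ideal.span_insert,
      Finset.coe_insert, Set.image_insert_eq]

theorem Ideal.span_range_eq_top_iff_gcd_eq_one {R ι : Type*} [CommRing R] [IsDomain R]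
    [IsBezout R] [NormalizedGCDMonoid R] [Fintype ι] (f : ι → R) :
    Ideal.span (Set.range f) = ⊤ ↔ Finset.univ.gcd f = 1 := by
  rw [← Set.image_univ, ← Finset.coe_univ, Finset.span_image_eq_span_gcd,
    Ideal.span_singleton_eq_top, ← normalize_eq_one, Finset.normalize_gcd]

namespace Polynomial

def monicsOfNatDegree (R : Type*) [Semiring R] (n : ℕ) : Set R[X] :=
  {p | p.Monic ∧ p.natDegree = n}

theorem natCard_monicsOfNatDegree (R : Type*) [Semiring R] [Nontrivial R] (n : ℕ) :
    Nat.card (monicsOfNatDegree R n) = Nat.card R ^ n :=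
  (Nat.card_congr ((monicEquivDegreeLT n).trans (degreeLTEquiv R n).toEquiv)).trans
    (by rw [Nat.card_fun, Nat.card_fin])

instance {R : Type*} [Semiring R] [Nontrivial R] [Finite R] (n : ℕ) :
    Finite (monicsOfNatDegree R n) :=
  .of_equiv _ ((monicEquivDegreeLT n).trans (degreeLTEquiv R n).toEquiv).symm

def coprimeMonicTuples (R ι : Type*) [CommSemiring R] (n : ℕ) : Set (ι → R[X]) :=
  {v | (∀ i, v i ∈ monicsOfNatDegree R n) ∧ Ideal.span (Set.range v) = ⊤}

instance {R ι : Type*} [CommRing R] [Nontrivial R] [Finite R] [Finite ι] (n : ℕ) :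
    Finite (coprimeMonicTuples R ι n) :=
  .of_injective (fun v i => (⟨v.1 i, v.2.1 i⟩ : monicsOfNatDegree R n)) fun v w h =>
    Subtype.ext <| by funext i; exact congrArg Subtype.val (congrFun h i)

section Factorization

variable {F ι : Type*} [Field F] [DecidableEq F]

theorem monic_finset_gcd {s : Finset ι} {f : ι → F[X]} {i : ι} (hi : i ∈ s) (hf : f i ≠ 0) :
    (s.gcd f).Monic := by
  rw [← Finset.normalize_gcd]
  exact monic_normalize fun h => hf (Finset.gcd_eq_zero_iff.1 h i hi)

theorem Monic.gcd_univ_mul_of_span_range_eq_top [Fintype ι] {d : F[X]} (hd : d.Monic)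
    {w : ι → F[X]} (hw : Ideal.span (Set.range w) = ⊤) :
    Finset.univ.gcd (fun i => d * w i) = d := by
  rw [Finset.gcd_mul_left, (Ideal.span_range_eq_top_iff_gcd_eq_one w).1 hw,
    hd.normalize_eq_self, mul_one]

noncomputable def mulCoprimeTuple (ι : Type*) (n : ℕ) :
    (Σ k : Fin (n + 1), monicsOfNatDegree F k × coprimeMonicTuples F ι (n - k)) →
      (ι → monicsOfNatDegree F n) :=
  fun ⟨k, d, w⟩ i => ⟨d * w.1 i, d.2.1.mul (w.2.1 i).1, by
    rw [d.2.1.natDegree_mul (w.2.1 i).1, d.2.2, (w.2.1 i).2]; omega⟩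

theorem mulCoprimeTuple_injective [Fintype ι] (n : ℕ) :
    Function.Injective (mulCoprimeTuple (F := F) ι n) := by
  rintro ⟨k, ⟨d, hd⟩, ⟨w, hw⟩⟩ ⟨k', ⟨d', hd'⟩, ⟨w', hw'⟩⟩ h
  have hdw : (fun i => d * w i) = fun i => d' * w' i := by
    funext i; exact congrArg Subtype.val (congrFun h i)
  obtain rfl : d = d' := by
    rw [← hd.1.gcd_univ_mul_of_span_range_eq_top hw.2, hdw,
      hd'.1.gcd_univ_mul_of_span_range_eq_top hw'.2]
  obtain rfl : k = k' := Fin.ext (hd.2.symm.trans hd'.2)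
  obtain rfl : w = w' := by
    funext i; exact mul_left_cancel₀ hd.1.ne_zero (congrFun hdw i)
  rfl

theorem mulCoprimeTuple_surjective [Fintype ι] [Nonempty ι] (n : ℕ) :
    Function.Surjective (mulCoprimeTuple (F := F) ι n) := by
  intro v
  obtain ⟨i₀⟩ := ‹Nonempty ι›
  obtain ⟨w, hvw, hw⟩ := Finset.extract_gcd (fun i => (v i).1) Finset.univ_nonempty
  set g := Finset.univ.gcd fun i => (v i).1
  have hg : g.Monic := monic_finset_gcd (Finset.mem_univ i₀) (v i₀).2.1.ne_zero
  have hvw' : ∀ i, (v i).1 = g * w i := fun i => hvw i (Finset.mem_univ i)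
  have hwm : ∀ i, (w i).Monic := fun i => hg.of_mul_monic_left (hvw' i ▸ (v i).2.1)
  have hdeg : ∀ i, g.natDegree + (w i).natDegree = n := fun i => by
    rw [← hg.natDegree_mul (hwm i), ← hvw' i, (v i).2.2]
  refine ⟨⟨⟨_, Nat.lt_succ_of_le (Nat.le.intro (hdeg i₀))⟩, ⟨_, hg, rfl⟩,
    ⟨w, fun i => ⟨hwm i, by have := hdeg i; dsimp only; omega⟩,
      (Ideal.span_range_eq_top_iff_gcd_eq_one w).2 hw⟩⟩, ?_⟩
  funext i
  exact Subtype.ext (hvw' i).symm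

end Factorization

theorem natCard_pow_eq_sum_natCard_coprimeMonicTuples (F ι : Type*) [Field F] [Finite F]
    [Finite ι] [Nonempty ι] (n : ℕ) :
    Nat.card F ^ (Nat.card ι * n) =
      ∑ k ∈ Finset.range (n + 1), Nat.card F ^ k * Nat.card (coprimeMonicTuples F ι (n - k)) := by
  classical
  have := Fintype.ofFinite ι
  calc Nat.card F ^ (Nat.card ι * n)
      = Nat.card (ι → monicsOfNatDegree F n) := by
        rw [Nat.card_fun, natCard_monicsOfNatDegree, pow_mul']
    _ = Nat.card (Σ k : Fin (n + 1), monicsOfNatDegree F k × coprimeMonicTuples F ι (n - k)) :=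
        (Nat.card_congr
          (.ofBijective _ ⟨mulCoprimeTuple_injective n, mulCoprimeTuple_surjective n⟩)).symm
    _ = _ := by
        simp only [Nat.card_sigma, Nat.card_prod, natCard_monicsOfNatDegree]
        exact Fin.sum_univ_eq_sum_range
          (fun k => Nat.card F ^ k * Nat.card (coprimeMonicTuples F ι (n - k))) (n + 1)

end Polynomial

/-- The number of r-tuples of monic polynomials of degree n over F_q
whose gcd is 1 (equivalently, which generate the unit ideal) equals
q^{rn} - q^{r(n-1)+1}. -/
theorem stmt_0 (F : Type*) [Field F] [Fintype F] (q : ℕ) (hq : q = Fintype.card F)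
    (r n : ℕ) (hr : 2 ≤ r) (hn : 1 ≤ n) :
    Nat.card {v : Fin r → Polynomial F //
        (∀ i, (v i).Monic ∧ (v i).natDegree = n) ∧
        Ideal.span (Set.range v) = ⊤} =
      q ^ (r * n) - q ^ (r * (n - 1) + 1) := by
  obtain ⟨m, rfl⟩ : ∃ m, n = m + 1 := ⟨n - 1, by omega⟩
  change Nat.card (coprimeMonicTuples F (Fin r) (m + 1)) = _
  have : Nonempty (Fin r) := ⟨⟨0, by omega⟩⟩
  have hcount := natCard_pow_eq_sum_natCard_coprimeMonicTuples F (Fin r)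
  simp only [Nat.card_fin, Nat.card_eq_fintype_card (α := F), ← hq] at hcount
  have hrec : q ^ (r * (m + 1)) =
      Nat.card (coprimeMonicTuples F (Fin r) (m + 1)) + q ^ (r * m + 1) := by
    rw [hcount, Finset.sum_range_succ', add_comm, pow_succ, hcount, Finset.sum_mul]
    simp only [pow_zero, one_mul, Nat.sub_zero, Nat.succ_sub_succ, pow_succ, mul_right_comm]
  rw [Nat.add_sub_cancel, hrec, Nat.add_sub_cancel]
end

section
/- For every monic irreducible polynomial f of degree mn over F_q, there exists an (m,n)-block companion matrix T over F_q whose characteristic polynomial is f. In particular, the characteristic map from (m,n)-block companion matrices with irreducible characteristic polynomial to monic irreducible polynomials of degree mn is surjective. -/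
open Polynomial

/-- An (m,n)-block companion matrix: identity blocks I_m on the block subdiagonal,
arbitrary m×m blocks C_0,...,C_{n-1} in the last block column, zeros elsewhere.
Rows/columns are indexed by pairs (block index, index within block). -/
def IsBlockCompanion {F : Type*} [Field F] {m n : ℕ}
    (T : Matrix (Fin n × Fin m) (Fin n × Fin m) F) : Prop :=
  ∃ C : Fin n → Matrix (Fin m) (Fin m) F,
    ∀ (i j : Fin n) (a b : Fin m),
      T (i, a) (j, b) =
        if (j : ℕ) = n - 1 then C i a b
        else if (i : ℕ) = (j : ℕ) + 1 then (if a = b then 1 else 0) else 0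

/-- For every monic irreducible polynomial f of degree mn over F_q there
is an (m,n)-block companion matrix with characteristic polynomial f; i.e. the
characteristic map Θ is surjective. -/
theorem stmt_4 (F : Type*) [Field F] [Fintype F]
    (m n : ℕ) (hm : 0 < m) (hn : 0 < n)
    (f : Polynomial F) (hf : f.Monic) (hirr : Irreducible f)
    (hdeg : f.natDegree = m * n) :
    ∃ T : Matrix (Fin n × Fin m) (Fin n × Fin m) F,
      IsBlockCompanion T ∧ Matrix.charpoly T = f := by
  have hf0 : f ≠ 0 := hf.ne_zero
  haveI : Fact (Irreducible f) := ⟨hirr⟩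
  set K := AdjoinRoot f
  set x : K := AdjoinRoot.root f
  set pb : PowerBasis F K := AdjoinRoot.powerBasis hf0 with hpb
  haveI : Module.Finite F K := Module.Finite.of_basis pb.basis
  haveI : Module.Free F K := Module.Free.of_basis pb.basis
  set φ : Module.End F K := Algebra.lmul F K x with hφ
  -- charpoly of φ equals f
  have hmin : minpoly F x = f := by
    have := AdjoinRoot.minpoly_root (f := f) hf0
    rwa [hf.leadingCoeff, inv_one, map_one, mul_one] at this
  have haev : aeval x φ.charpoly = 0 := by
    have h1 : aeval φ φ.charpoly = 0 := LinearMap.aeval_self_charpoly φ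
    have h2 : aeval φ φ.charpoly = Algebra.lmul F K (aeval x φ.charpoly) := by
      rw [hφ]
      exact (Polynomial.aeval_algHom_apply (Algebra.lmul F K) x φ.charpoly)
    have h3 : Algebra.lmul F K (aeval x φ.charpoly) = 0 := by rw [← h2, h1]
    have h4 := congrArg (fun g : Module.End F K => g 1) h3
    simpa using h4
  have hdvd : f ∣ φ.charpoly := by
    have h := minpoly.dvd F x haev
    rwa [hmin] at h
  have hdim : pb.dim = f.natDegree := rfl
  have hrank : Module.finrank F K = f.natDegree := by
    rw [← hdim]; exact pb.finrank
  have hcdeg : φ.charpoly.natDegree = f.natDegree := by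
    rw [LinearMap.charpoly_natDegree, hrank]
  have hch : φ.charpoly = f := by
    obtain ⟨c, hc⟩ := hdvd
    have hc0 : c ≠ 0 := by
      rintro rfl
      rw [mul_zero] at hc
      exact (φ.charpoly_monic.ne_zero) hc
    have hdc : c.natDegree = 0 := by
      have := hcdeg
      rw [hc, natDegree_mul hf0 hc0] at this
      omega
    have : c = C (c.coeff 0) := (Polynomial.eq_C_of_natDegree_eq_zero hdc)
    rw [this] at hc
    have hlc := congrArg Polynomial.leadingCoeff hc
    rw [φ.charpoly_monic.leadingCoeff, leadingCoeff_mul, hf.leadingCoeff,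
      one_mul, leadingCoeff_C] at hlc
    rw [hc, ← hlc, map_one, mul_one]
  -- the matrix of φ in the power basis, reindexed
  have hN : m * n = pb.dim := by rw [hdim, hdeg]
  set e : Fin n × Fin m ≃ Fin pb.dim :=
    (Equiv.prodComm _ _).trans (finProdFinEquiv.trans (finCongr hN)) with he
  have heval : ∀ (j : Fin n) (b : Fin m), ((e (j, b) : Fin pb.dim) : ℕ) = (j : ℕ) + n * b := by
    intro j b
    simp [he, finProdFinEquiv]
  set M := LinearMap.toMatrix pb.basis pb.basis φ with hM
  refine ⟨Matrix.reindex e.symm e.symm M, ?_, ?_⟩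
  · -- block companion shape
    refine ⟨fun i => fun a b => (Matrix.reindex e.symm e.symm M) (i, a) (⟨n - 1, by omega⟩, b),
      fun i j a b => ?_⟩
    by_cases hj : (j : ℕ) = n - 1
    · have : j = ⟨n - 1, by omega⟩ := Fin.ext hj
      rw [this, if_pos]
      rfl
    · rw [if_neg hj]
      have hjlt : (j : ℕ) + 1 < n := by omega
      -- entry of M
      have hq1 : (j : ℕ) + 1 + n * (b : ℕ) < pb.dim := by
        rw [← hN]
        have hnb : n * (b : ℕ) ≤ n * (m - 1) := Nat.mul_le_mul_left n (by omega)
        have hnm : m * n = n * (m - 1) + n := by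
          rw [Nat.mul_comm, ← Nat.mul_succ]; congr 1; omega
        omega
      have hcol : (((e (j, b) : Fin pb.dim) : ℕ)) + 1 < pb.dim := by
        rw [heval]; omega
      have hbasis : φ (pb.basis (e (j, b))) = pb.basis ⟨(e (j, b) : ℕ) + 1, hcol⟩ := by
        rw [hφ]
        have h1 : pb.basis (e (j, b)) = pb.gen ^ ((e (j, b) : Fin pb.dim) : ℕ) :=
          pb.basis_eq_pow _
        have h2 : pb.basis ⟨(e (j, b) : ℕ) + 1, hcol⟩ = pb.gen ^ ((e (j, b) : ℕ) + 1) :=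
          pb.basis_eq_pow _
        have hgen : pb.gen = x := rfl
        rw [h1, h2, hgen]
        simp [Algebra.lmul, pow_succ, mul_comm]
      have hentry : (Matrix.reindex e.symm e.symm M) (i, a) (j, b)
          = pb.basis.repr (φ (pb.basis (e (j, b)))) (e (i, a)) := by
        simp [Matrix.reindex_apply, hM, LinearMap.toMatrix_apply]
      rw [hentry, hbasis, pb.basis.repr_self]
      rw [Finsupp.single_apply]
      by_cases hcase : (i : ℕ) = (j : ℕ) + 1 ∧ a = b
      · obtain ⟨h1, h2⟩ := hcase
        rw [if_pos (by omega : (i : ℕ) = (j : ℕ) + 1), if_pos h2, if_pos]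
        subst h2
        apply Fin.ext
        simp only [heval]
        omega
      · rw [if_neg]
        · by_cases h1 : (i : ℕ) = (j : ℕ) + 1
          · rw [if_pos h1, if_neg (fun h2 => hcase ⟨h1, h2⟩)]
          · rw [if_neg h1]
        · intro heq
          have hv := congrArg (fun t : Fin pb.dim => (t : ℕ)) heq
          simp only [heval] at hv
          -- hv : j + 1 + n * b = i + n * a
          have hmod : ((j : ℕ) + 1 + n * (b : ℕ)) % n = ((i : ℕ) + n * (a : ℕ)) % n := by
            congr 1; omega
          rw [Nat.add_mul_mod_self_left, Nat.add_mul_mod_self_left,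
            Nat.mod_eq_of_lt hjlt, Nat.mod_eq_of_lt i.isLt] at hmod
          have hab : (a : ℕ) = (b : ℕ) := by
            have : n * (b : ℕ) = n * (a : ℕ) := by omega
            exact (Nat.eq_of_mul_eq_mul_left hn this).symm
          exact hcase ⟨by omega, Fin.ext hab⟩
  · rw [Matrix.charpoly_reindex, hM, LinearMap.charpoly_toMatrix, hch]
end

section
/- Let f be a monic irreducible polynomial of degree 2n over F_q and α ∈ F_{q^{2n}} a root of f. A matrix T ∈ M_{2n}(F_q) satisfies: T is a (2,n)-block companion matrix with characteristic polynomial f, if and only if T is the matrix of the F_q-linear map x ↦ αx on F_{q^{2n}} with respect to an ordered basis of the form (v_1, v_2, αv_1, αv_2, ..., α^{n-1}v_1, α^{n-1}v_2) for some v_1, v_2 ∈ F_{q^{2n}}. -/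
/-!
Since `f` is irreducible of degree `2n = [K : F]`, it is the minimal polynomial of `α`, `α`
generates `K`, and `charpoly L_α = f`. If `charpoly T = f`, then `T` is annihilated by `f`, so
sending `α ↦ T` makes `F^{2n}` a one-dimensional `K`-vector space; any nonzero vector then gives
an `F`-isomorphism `K ≃ F^{2n}` conjugating `L_α` to `T`, i.e. a basis of `K` in which `L_α` has
matrix `T`. In a basis `b` indexed by `Fin n × Fin 2`, the matrix of `L_α` is block companion
exactly when `α * b (j, c) = b (j + 1, c)` for `j < n - 1`, i.e. `b (j, c) = α ^ j * b (0, c)`.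
-/

open Polynomial

open Module

theorem charpoly_mulLeft_eq_minpoly {F K : Type*} [Field F] [Field K] [Algebra F K]
    [FiniteDimensional F K] {α : K} (hα : (minpoly F α).natDegree = finrank F K) :
    (LinearMap.mulLeft F α).charpoly = minpoly F α := by
  have hmin : minpoly F (LinearMap.mulLeft F α) = minpoly F α :=
    minpoly.algHom_eq (Algebra.lmul F K) Algebra.lmul_injective α
  refine eq_of_monic_of_dvd_of_natDegree_le (minpoly.monic (IsIntegral.of_finite F α))
    (LinearMap.mulLeft F α).charpoly_monic ?_ ?_
  · exact hmin ▸ LinearMap.minpoly_dvd_charpoly _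
  · rw [LinearMap.charpoly_natDegree, hα]

theorem isBlockCompanion_toMatrix_iff {F M : Type*} [Field F] [AddCommGroup M] [Module F M]
    {m n : ℕ} (b : Basis (Fin n × Fin m) F M) (φ : M →ₗ[F] M) :
    IsBlockCompanion (LinearMap.toMatrix b b φ) ↔
      ∀ (j : Fin n) (hj : (j : ℕ) + 1 < n) (c : Fin m), φ (b (j, c)) = b (⟨j + 1, hj⟩, c) := by
  have entry : ∀ i j a c, LinearMap.toMatrix b b φ (i, a) (j, c) = b.repr (φ (b (j, c))) (i, a) :=
    fun _ _ _ _ => LinearMap.toMatrix_apply _ _ _ _ _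
  constructor
  · rintro ⟨C, hC⟩ j hj c
    refine b.repr.injective (Finsupp.ext fun ⟨i, a⟩ => ?_)
    rw [← entry, hC, if_neg (by omega), b.repr_self, Finsupp.single_apply]
    simp [Prod.ext_iff, Fin.ext_iff, eq_comm, ite_and]
  · intro h
    refine ⟨fun i a c => LinearMap.toMatrix b b φ (i, a) (⟨n - 1, Nat.sub_one_lt_of_lt i.2⟩, c),
      fun i j a c => ?_⟩
    by_cases hj : (j : ℕ) = n - 1
    · rw [if_pos hj, (Fin.ext hj : j = ⟨n - 1, _⟩)]
    rw [if_neg hj, entry, h j (by omega), b.repr_self, Finsupp.single_apply]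
    simp [Prod.ext_iff, Fin.ext_iff, eq_comm, ite_and]

theorem exists_eq_pow_mul_iff {M : Type*} [Monoid M] {n m : ℕ} (α : M) (u : Fin n × Fin m → M) :
    (∃ v : Fin m → M, ∀ p, u p = α ^ (p.1 : ℕ) * v p.2) ↔
      ∀ (j : Fin n) (hj : (j : ℕ) + 1 < n) (c : Fin m), α * u (j, c) = u (⟨j + 1, hj⟩, c) := by
  constructor
  · rintro ⟨v, hv⟩ j hj c
    rw [hv, hv, ← mul_assoc, ← pow_succ']
  · intro h
    cases n with
    | zero => exact ⟨1, fun p => p.1.elim0⟩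
    | succ k =>
      refine ⟨fun c => u (0, c), fun ⟨⟨i, hi⟩, c⟩ => ?_⟩
      induction i with
      | zero => simp
      | succ i ih => rw [← h ⟨i, by omega⟩ hi c, ih (by omega), pow_succ', mul_assoc]

theorem injective_apply_of_ne_zero {A F V : Type*} [Field A] [CommRing F] [AddCommGroup V]
    [Module F V] (ρ : A →+* Module.End F V) {w : V} (hw : w ≠ 0) :
    Function.Injective fun a => ρ a w := by
  intro a a' h
  by_contra hne
  have hker : ρ (a - a') w = 0 := by simpa [sub_eq_zero] using h
  apply hw
  rw [← Module.End.one_apply (R := F) w, ← map_one ρ, ← inv_mul_cancel₀ (sub_ne_zero.mpr hne),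
    map_mul, Module.End.mul_apply, hker, map_zero]

theorem adjoin_simple_eq_top_of_finrank_eq {F K : Type*} [Field F] [Field K] [Algebra F K]
    [FiniteDimensional F K] {α : K} (hK : finrank F K = (minpoly F α).natDegree) :
    Algebra.adjoin F {α} = ⊤ := by
  refine Algebra.toSubmodule_eq_top.1 (Submodule.eq_top_of_finrank_eq ?_)
  rw [Subalgebra.finrank_toSubmodule, (Algebra.adjoin.powerBasis (.of_finite F α)).finrank, hK]
  rfl

theorem exists_linearEquiv_mulLeft_conj {F K V : Type*} [Field F] [Field K] [Algebra F K]
    [FiniteDimensional F K] [AddCommGroup V] [Module F V] [FiniteDimensional F V] {α : K}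
    (hK : finrank F K = (minpoly F α).natDegree) (φ : Module.End F V)
    (hφ : aeval φ (minpoly F α) = 0) (hV : finrank F V = finrank F K) :
    ∃ E : K ≃ₗ[F] V, ∀ x, E (α * x) = φ (E x) := by
  let pb := PowerBasis.ofAdjoinEqTop (.of_finite F α) (adjoin_simple_eq_top_of_finrank_eq hK)
  let ρ := pb.lift φ hφ
  have hρ : ρ α = φ := PowerBasis.lift_gen _ _ _
  have : Nontrivial V := Module.nontrivial_of_finrank_pos (R := F) (hV.trans_gt finrank_pos)
  obtain ⟨w, hw⟩ := exists_ne (0 : V)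
  let E := ((LinearMap.applyₗ w).comp ρ.toLinearMap).linearEquivOfInjective
      (injective_apply_of_ne_zero ρ.toRingHom hw) hV.symm
  refine ⟨E, fun x => ?_⟩
  change ρ (α * x) w = φ (ρ x w)
  rw [map_mul, hρ, Module.End.mul_apply]

theorem exists_basis_toMatrix_mulLeft_eq {F K ι : Type*} [Field F] [Field K] [Algebra F K]
    [FiniteDimensional F K] [Fintype ι] [DecidableEq ι] {α : K} (T : Matrix ι ι F)
    (hT : T.charpoly = minpoly F α) (hK : finrank F K = Fintype.card ι) :
    ∃ b : Basis ι F K, LinearMap.toMatrix b b (LinearMap.mulLeft F α) = T := by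
  have hφ : aeval (Matrix.toLin' T) (minpoly F α) = 0 := by
    rw [← hT, ← Matrix.charpoly_toLin']
    exact LinearMap.aeval_self_charpoly _
  have hdeg : finrank F K = (minpoly F α).natDegree := by
    rw [hK, ← hT, Matrix.charpoly_natDegree_eq_dim]
  obtain ⟨E, hE⟩ := exists_linearEquiv_mulLeft_conj hdeg (Matrix.toLin' T) hφ
    (by rw [hK, finrank_fintype_fun_eq_card])
  refine ⟨(Pi.basisFun F ι).map E.symm, ?_⟩
  have hconj : E.toLinearMap ∘ₗ LinearMap.mulLeft F α ∘ₗ E.symm.toLinearMap = Matrix.toLin' T :=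
    LinearMap.ext fun x => by simp [hE]
  rw [LinearMap.toMatrix_map_left, LinearMap.toMatrix_map_right, LinearEquiv.symm_symm,
    hconj, LinearMap.toMatrix_eq_toMatrix', LinearMap.toMatrix'_toLin']

theorem stmt_5_general (F : Type*) [Field F]
    (n : ℕ)
    (K : Type*) [Field K] [Algebra F K] [FiniteDimensional F K]
    (hK : Module.finrank F K = 2 * n)
    (f : Polynomial F) (hf : f.Monic) (hirr : Irreducible f)
    (hdeg : f.natDegree = 2 * n)
    (α : K) (hα : Polynomial.aeval α f = 0)
    (T : Matrix (Fin n × Fin 2) (Fin n × Fin 2) F) :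
    (IsBlockCompanion T ∧ Matrix.charpoly T = f) ↔
      ∃ (v : Fin 2 → K) (b : Module.Basis (Fin n × Fin 2) F K),
        (∀ p : Fin n × Fin 2, b p = α ^ (p.1 : ℕ) * v p.2) ∧
        T = LinearMap.toMatrix b b (LinearMap.mulLeft F α) := by
  have hmin : minpoly F α = f := (minpoly.eq_of_irreducible_of_monic hirr hα hf).symm
  constructor
  · rintro ⟨hT, hchar⟩
    obtain ⟨b, rfl⟩ :=
      exists_basis_toMatrix_mulLeft_eq T (hchar.trans hmin.symm) (by simp [hK, mul_comm])
    obtain ⟨v, hv⟩ := (exists_eq_pow_mul_iff α b).2 ((isBlockCompanion_toMatrix_iff b _).1 hT)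
    exact ⟨v, b, hv, rfl⟩
  · rintro ⟨v, b, hb, rfl⟩
    refine ⟨(isBlockCompanion_toMatrix_iff b _).2 ((exists_eq_pow_mul_iff α b).1 ⟨v, hb⟩), ?_⟩
    rw [LinearMap.charpoly_toMatrix, charpoly_mulLeft_eq_minpoly (by rw [hmin, hdeg, hK]), hmin]

/-- T is a (2,n)-block companion matrix with characteristic polynomial f
iff T is the matrix of x ↦ αx with respect to an ordered basis of the form
(v₁, v₂, αv₁, αv₂, ..., α^{n-1}v₁, α^{n-1}v₂). -/
theorem stmt_5 (F : Type*) [Field F] [Fintype F]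
    (n : ℕ) (hn : 0 < n)
    (K : Type*) [Field K] [Algebra F K] [FiniteDimensional F K]
    (hK : Module.finrank F K = 2 * n)
    (f : Polynomial F) (hf : f.Monic) (hirr : Irreducible f)
    (hdeg : f.natDegree = 2 * n)
    (α : K) (hα : Polynomial.aeval α f = 0)
    (T : Matrix (Fin n × Fin 2) (Fin n × Fin 2) F) :
    (IsBlockCompanion T ∧ Matrix.charpoly T = f) ↔
      ∃ (v : Fin 2 → K) (b : Module.Basis (Fin n × Fin 2) F K),
        (∀ p : Fin n × Fin 2, b p = α ^ (p.1 : ℕ) * v p.2) ∧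
        T = LinearMap.toMatrix b b (LinearMap.mulLeft F α) :=
  stmt_5_general F n K hK f hf hirr hdeg α hα T
end

section
/- Let f be a monic irreducible polynomial of degree 2n over F_q and α ∈ F_{q^{2n}} a root of f. The number of pairs (v_1, v_2) ∈ F_{q^{2n}}^2 such that (v_1, v_2, αv_1, αv_2, ..., α^{n-1}v_1, α^{n-1}v_2) is an F_q-basis of F_{q^{2n}} equals q^{2n-1}(q-1)(q^{2n}-1). -/
/-!
Write `W_m ⊆ F(α)` for the values at `α` of the polynomials of degree `< m`, and for `u ∈ K`
let `V_m(u) = {w ∈ W_m : u w ∈ W_m}`. The family `(α^i v_j)` is a basis iff `v₁ ≠ 0` and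
`V_n(v₂ / v₁) = 0`, so the count is `(q^{2n} - 1)` times the number of such `u = v₂ / v₁`.

While `2m ≤ deg α`, a nonzero `V_m(u)` is, for `u = a(α) / b(α)` in lowest terms, the space of
`(b c)(α)` with `deg c < m - max (deg a) (deg b)`; hence `|V_n(u)| = q |V_{n-1}(u)|` unless
`V_n(u) = 0`. Double counting the pairs `(u, w)` gives `∑_u |V_m(u)| = q^{2n} + q^m (q^m - 1)`,
and comparing these sums for `m = n` and `m = n - 1` leaves `q^{2n} - q^{2n-1}` values of `u` with
`V_n(u) = 0`.
-/

open Polynomial Module Submodule Set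

section

variable {F K : Type*} [Field F] [Field K] [Algebra F K]

theorem mul_mem_degreeLT {p c : F[X]} {d k : ℕ} (hp : p.natDegree ≤ d)
    (hc : c ∈ degreeLT F k) :
    p * c ∈ degreeLT F (d + k) := by
  rcases eq_or_ne p 0 with rfl | hp0
  · rw [zero_mul]
    exact zero_mem _
  rw [mem_degreeLT] at hc ⊢
  calc (p * c).degree ≤ p.degree + c.degree := degree_mul_le p c
    _ < d + k := WithBot.add_lt_add_of_le_of_lt (degree_ne_bot.2 hp0)
      (degree_le_of_natDegree_le hp) hc

theorem mem_degreeLT_of_mul_mem {p c : F[X]} {m : ℕ} (hp : p ≠ 0)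
    (hpc : p * c ∈ degreeLT F m) :
    c ∈ degreeLT F (m - p.natDegree) := by
  rcases eq_or_ne c 0 with rfl | hc
  · exact zero_mem _
  rw [mem_degreeLT, ← natDegree_lt_iff_degree_lt (mul_ne_zero hp hc), natDegree_mul hp hc] at hpc
  rw [mem_degreeLT, ← natDegree_lt_iff_degree_lt hc]
  omega

theorem natDegree_le_of_mem_degreeLT_succ {p : F[X]} {m : ℕ} (hp : p ∈ degreeLT F (m + 1)) :
    p.natDegree ≤ m := by
  rw [degreeLT_succ_eq_degreeLE, mem_degreeLE] at hp
  exact natDegree_le_iff_degree_le.2 hp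

theorem eq_zero_of_aeval_eq_zero_of_mem_degreeLT {α : K} {p : F[X]}
    (hp : p ∈ degreeLT F (minpoly F α).natDegree) (h : aeval α p = 0) : p = 0 := by
  by_contra hp0
  have hle := natDegree_le_natDegree (minpoly.degree_le_of_ne_zero F α hp0 h)
  rw [mem_degreeLT, ← natDegree_lt_iff_degree_lt hp0] at hp
  omega

theorem eq_of_aeval_eq_of_mem_degreeLT {α : K} {N : ℕ} (hN : N ≤ (minpoly F α).natDegree)
    {p r : F[X]} (hp : p ∈ degreeLT F N) (hr : r ∈ degreeLT F N)
    (h : aeval α p = aeval α r) : p = r :=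
  sub_eq_zero.1 <| eq_zero_of_aeval_eq_zero_of_mem_degreeLT
    (degreeLT_mono hN (sub_mem hp hr)) (by rw [map_sub, h, sub_self])

variable (F) in
noncomputable def aevalDegreeLT (α : K) (m : ℕ) : Submodule F K :=
  (degreeLT F m).map (aeval α).toLinearMap

theorem mem_aevalDegreeLT {α : K} {m : ℕ} {w : K} :
    w ∈ aevalDegreeLT F α m ↔ ∃ p ∈ degreeLT F m, aeval α p = w :=
  Submodule.mem_map

theorem aevalDegreeLT_mono {α : K} {m m' : ℕ} (h : m ≤ m') :
    aevalDegreeLT F α m ≤ aevalDegreeLT F α m' :=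
  Submodule.map_mono (degreeLT_mono h)

theorem degreeLT_eq_span_X_pow_fin (m : ℕ) :
    degreeLT F m = span F (range fun i : Fin m => (X : F[X]) ^ (i : ℕ)) := by
  have := congrArg (Submodule.map (degreeLT F m).subtype) (degreeLT.basis F m).span_eq
  rw [Submodule.map_span, Submodule.map_subtype_top, ← Set.range_comp] at this
  rw [← this]
  congr 2
  ext i
  simp

theorem aevalDegreeLT_eq_span (α : K) (m : ℕ) :
    aevalDegreeLT F α m = span F (range fun i : Fin m => α ^ (i : ℕ)) := by
  rw [aevalDegreeLT, degreeLT_eq_span_X_pow_fin, Submodule.map_span, ← Set.range_comp]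
  congr 2
  ext i
  simp

theorem linearIndependent_pow_of_le_natDegree_minpoly {α : K} {m : ℕ}
    (hm : m ≤ (minpoly F α).natDegree) : LinearIndependent F fun i : Fin m => α ^ (i : ℕ) :=
  (linearIndependent_pow α).comp (Fin.castLE hm) (Fin.castLE_injective hm)

theorem finrank_aevalDegreeLT {α : K} {m : ℕ} (hm : m ≤ (minpoly F α).natDegree) :
    finrank F (aevalDegreeLT F α m) = m := by
  rw [aevalDegreeLT_eq_span, finrank_span_eq_card
    (linearIndependent_pow_of_le_natDegree_minpoly hm), Fintype.card_fin]

/-- `w` is a denominator of `u` over `W` when `u = (u * w) / w` is a fraction of elements of `W`. -/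
def denominators (W : Submodule F K) (u : K) : Submodule F K :=
  W ⊓ W.comap (LinearMap.mulLeft F u)

theorem mem_denominators {W : Submodule F K} {u w : K} :
    w ∈ denominators W u ↔ w ∈ W ∧ u * w ∈ W :=
  Iff.rfl

theorem denominators_mono {W W' : Submodule F K} (h : W ≤ W') (u : K) :
    denominators W u ≤ denominators W' u :=
  inf_le_inf h (comap_mono h)

theorem linearIndependent_mul_pair_iff {ι : Type*} [Fintype ι] [Nonempty ι] {e : ι → K}
    (he : LinearIndependent F e) (v : Fin 2 → K) :
    LinearIndependent F (fun p : ι × Fin 2 => e p.1 * v p.2) ↔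
      v 0 ≠ 0 ∧ denominators (span F (range e)) (v 1 / v 0) = ⊥ := by
  have hsum (g : ι × Fin 2 → F) : ∑ p, g p • (e p.1 * v p.2) =
      (∑ i, g (i, 0) • e i) * v 0 + (∑ i, g (i, 1) • e i) * v 1 := by
    simp only [Fintype.sum_prod_type, Fin.sum_univ_two, Finset.sum_add_distrib, Finset.sum_mul,
      smul_mul_assoc]
  have hmem (c : ι → F) : ∑ i, c i • e i ∈ span F (range e) :=
    (mem_span_range_iff_exists_fun F).2 ⟨c, rfl⟩
  constructor
  · intro hli
    obtain ⟨i₀⟩ := ‹Nonempty ι›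
    have hv0 : v 0 ≠ 0 := right_ne_zero_of_mul (hli.ne_zero (i₀, 0))
    refine ⟨hv0, (Submodule.eq_bot_iff _).2 fun w hw => ?_⟩
    obtain ⟨c, rfl⟩ := (mem_span_range_iff_exists_fun F).1 hw.1
    obtain ⟨d, hd⟩ := (mem_span_range_iff_exists_fun F).1 hw.2
    have hc : c = 0 := by
      funext i
      refine Fintype.linearIndependent_iff.1 hli (fun p => ![-d p.1, c p.1] p.2) ?_ (i, 1)
      rw [LinearMap.mulLeft_apply] at hd
      rw [hsum]
      simp only [Matrix.cons_val_zero, Matrix.cons_val_one, neg_smul, Finset.sum_neg_distrib, hd]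
      field_simp
      ring
    simp [hc]
  · rintro ⟨hv0, hden⟩
    refine Fintype.linearIndependent_iff.2 fun g hg => ?_
    rw [hsum] at hg
    have hy : ∑ i, g (i, 1) • e i = 0 := by
      refine (Submodule.eq_bot_iff _).1 hden _ ⟨hmem _, ?_⟩
      have : v 1 / v 0 * ∑ i, g (i, 1) • e i = ∑ i, (-g (i, 0)) • e i := by
        simp only [neg_smul, Finset.sum_neg_distrib]
        field_simp
        linear_combination hg
      simp only [comap_coe, Set.mem_preimage, LinearMap.mulLeft_apply, SetLike.mem_coe]
      rw [this]
      exact hmem _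
    have hx : ∑ i, g (i, 0) • e i = 0 := by simpa [hy, hv0] using hg
    rintro ⟨i, j⟩
    fin_cases j
    · exact Fintype.linearIndependent_iff.1 he _ hx i
    · exact Fintype.linearIndependent_iff.1 he _ hy i

theorem exists_basis_eq_iff_linearIndependent {ι M : Type*} [Fintype ι] [AddCommGroup M]
    [Module F M] [FiniteDimensional F M] {x : ι → M} (hcard : Fintype.card ι = finrank F M) :
    (∃ b : Basis ι F M, ∀ i, b i = x i) ↔ LinearIndependent F x :=
  ⟨fun ⟨b, hb⟩ => (funext hb : ⇑b = x) ▸ b.linearIndependent,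
    fun hx => ⟨basisOfLinearIndependentOfCardEqFinrank' x hx hcard, fun i => by simp⟩⟩

theorem exists_isCoprime_of_denominators_ne_bot {α u : K} {m : ℕ}
    (h : denominators (aevalDegreeLT F α (m + 1)) u ≠ ⊥) :
    ∃ a b : F[X], IsCoprime a b ∧ b ≠ 0 ∧ u * aeval α b = aeval α a ∧
      a.natDegree ≤ m ∧ b.natDegree ≤ m := by
  classical
  obtain ⟨w, ⟨hw, huw⟩, hw0⟩ := (Submodule.ne_bot_iff _).1 h
  obtain ⟨b', hb', rfl⟩ := mem_aevalDegreeLT.1 hw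
  obtain ⟨a', ha', ha'u⟩ := mem_aevalDegreeLT.1 huw
  rw [LinearMap.mulLeft_apply] at ha'u
  obtain ⟨a, b, ha, hb, hunit⟩ := extract_gcd a' b'
  set g := gcd a' b'
  have hgb : aeval α g * aeval α b ≠ 0 := by rwa [← map_mul, ← hb]
  have hg : g ≠ 0 := by
    rintro hg
    simp [hg] at hgb
  have hdeg {p p' : F[X]} (hp : p' = g * p) (hp' : p' ∈ degreeLT F (m + 1)) : p.natDegree ≤ m :=
    natDegree_le_of_mem_degreeLT_succ <| mem_degreeLT.2 <|
      (degree_le_mul_left p hg).trans_lt (by rwa [mul_comm, ← hp, ← mem_degreeLT])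
  refine ⟨a, b, (gcd_isUnit_iff a b).1 hunit, ?_, ?_, hdeg ha ha', hdeg hb hb'⟩
  · rintro rfl
    simp at hgb
  · refine mul_left_cancel₀ (left_ne_zero_of_mul hgb) ?_
    calc aeval α g * (u * aeval α b) = u * aeval α (g * b) := by rw [map_mul]; ring
      _ = aeval α (g * a) := by rw [← hb, ← ha, ha'u]
      _ = aeval α g * aeval α a := map_mul _ _ _

theorem finrank_denominators_aevalDegreeLT {α u : K} {a b : F[X]} (hab : IsCoprime a b)
    (hb : b ≠ 0) (hu : u * aeval α b = aeval α a) {m : ℕ}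
    (hM : max a.natDegree b.natDegree ≤ m)
    (hmN : m + max a.natDegree b.natDegree ≤ (minpoly F α).natDegree) :
    finrank F (denominators (aevalDegreeLT F α m) u) = m - max a.natDegree b.natDegree := by
  set M := max a.natDegree b.natDegree
  let φ : degreeLT F (m - M) →ₗ[F] K :=
    (aeval α).toLinearMap ∘ₗ LinearMap.mulLeft F b ∘ₗ (degreeLT F (m - M)).subtype
  have hφ (c : degreeLT F (m - M)) : φ c = aeval α (b * (c : F[X])) := rfl
  have hdeg {p c : F[X]} (hp : p.natDegree ≤ M) (hc : c ∈ degreeLT F (m - M)) :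
      p * c ∈ degreeLT F m :=
    degreeLT_mono (by omega) (mul_mem_degreeLT hp hc)
  have hinj : Function.Injective φ := fun c c' h =>
    Subtype.ext <| mul_left_cancel₀ hb <| eq_of_aeval_eq_of_mem_degreeLT (by omega)
      (hdeg (le_max_right _ _) c.2) (hdeg (le_max_right _ _) c'.2) h
  have hrange : LinearMap.range φ = denominators (aevalDegreeLT F α m) u := by
    ext w
    constructor
    · rintro ⟨c, rfl⟩
      refine ⟨mem_aevalDegreeLT.2 ⟨_, hdeg (le_max_right _ _) c.2, rfl⟩,
        mem_aevalDegreeLT.2 ⟨a * c, hdeg (le_max_left _ _) c.2, ?_⟩⟩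
      rw [hφ, LinearMap.mulLeft_apply, map_mul, map_mul, ← mul_assoc, hu]
    · rintro ⟨hw, huw⟩
      obtain ⟨b', hb', rfl⟩ := mem_aevalDegreeLT.1 hw
      obtain ⟨a', ha', ha'u⟩ := mem_aevalDegreeLT.1 huw
      rw [LinearMap.mulLeft_apply] at ha'u
      have hcross : b * a' = a * b' :=
        eq_of_aeval_eq_of_mem_degreeLT (α := α) (by omega)
          (mul_mem_degreeLT (le_max_right _ _) ha') (mul_mem_degreeLT (le_max_left _ _) hb')
          (by rw [map_mul, map_mul, ha'u, ← hu]; ring)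
      obtain ⟨c, rfl⟩ : b ∣ b' := hab.symm.dvd_of_dvd_mul_left ⟨a', hcross.symm⟩
      have ha'c : a' = a * c := mul_left_cancel₀ hb (by rw [hcross]; ring)
      refine ⟨⟨c, ?_⟩, rfl⟩
      rcases le_or_gt a.natDegree b.natDegree with hab' | hba
      · rw [show M = b.natDegree from max_eq_right hab']
        exact mem_degreeLT_of_mul_mem hb hb'
      · have ha : a ≠ 0 := by
          rintro rfl
          simp at hba
        rw [show M = a.natDegree from max_eq_left hba.le]
        exact mem_degreeLT_of_mul_mem ha (ha'c ▸ ha')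
  rw [← hrange, LinearMap.finrank_range_of_inj hinj, (degreeLTEquiv F _).finrank_eq,
    finrank_fin_fun]

section Counting

variable [Fintype K]

theorem sum_card_denominators (W : Submodule F K) :
    ∑ u : K, Nat.card (denominators W u) + Nat.card W = Nat.card K + Nat.card W * Nat.card W := by
  classical
  set S := (W : Set K).toFinset
  have hS : S.card = Nat.card W := by
    rw [Set.toFinset_card, ← Nat.card_eq_fintype_card, SetLike.coe_sort_coe]
  have hfiber (w : K) :
      Nat.card (denominators W w) = ∑ v ∈ S, if w * v ∈ W then 1 else 0 := by
    rw [Finset.sum_boole, Nat.cast_id, ← SetLike.coe_sort_coe, Nat.card_eq_card_toFinset]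
    congr 1
    ext v
    simp [S, mem_denominators]
  have hcol (w : K) (hw : w ≠ 0) :
      (Finset.univ.filter fun u : K => u * w ∈ W).card = Nat.card W := by
    rw [← Fintype.card_subtype, ← Nat.card_eq_fintype_card]
    exact Nat.card_congr ((Equiv.mulRight₀ w hw).subtypeEquiv fun _ => Iff.rfl)
  have h0 : (0 : K) ∈ S := by simp [S]
  simp_rw [hfiber]
  rw [Finset.sum_comm]
  simp_rw [Finset.sum_boole, Nat.cast_id]
  rw [← Finset.add_sum_erase S _ h0,
    Finset.sum_congr rfl fun w hw => hcol w (Finset.ne_of_mem_erase hw), Finset.sum_const,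
    Finset.card_erase_of_mem h0, hS, smul_eq_mul, Nat.card_eq_fintype_card (α := K),
    ← Finset.card_univ]
  simp only [mul_zero, zero_mem, Finset.filter_true]
  rw [add_assoc, ← Nat.succ_mul, Nat.succ_eq_add_one, Nat.sub_add_cancel Nat.card_pos]

theorem card_denominators_succ {α u : K} {m : ℕ} (hm : 2 * m + 1 ≤ (minpoly F α).natDegree)
    (h : denominators (aevalDegreeLT F α (m + 1)) u ≠ ⊥) :
    Nat.card (denominators (aevalDegreeLT F α (m + 1)) u) =
      Nat.card F * Nat.card (denominators (aevalDegreeLT F α m) u) := by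
  obtain ⟨a, b, hab, hb, hu, ha, hb'⟩ := exists_isCoprime_of_denominators_ne_bot h
  have hM : max a.natDegree b.natDegree ≤ m := max_le ha hb'
  have hcard (W : Submodule F K) : Nat.card W = Nat.card F ^ finrank F W := natCard_eq_pow_finrank
  rw [hcard, hcard, finrank_denominators_aevalDegreeLT hab hb hu (by omega) (by omega),
    finrank_denominators_aevalDegreeLT hab hb hu hM (by omega), ← pow_succ']
  congr 1
  omega

theorem card_aevalDegreeLT {α : K} {m : ℕ} (hm : m ≤ (minpoly F α).natDegree) :
    Nat.card (aevalDegreeLT F α m) = Nat.card F ^ m := by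
  rw [natCard_eq_pow_finrank (K := F), finrank_aevalDegreeLT hm]

theorem card_denominators_eq_bot_add {α : K} {m : ℕ}
    (hm : 2 * m + 1 ≤ (minpoly F α).natDegree) :
    Nat.card {u : K // denominators (aevalDegreeLT F α (m + 1)) u = ⊥} +
      Nat.card F ^ (2 * m + 1) = Nat.card K := by
  classical
  have hA := sum_card_denominators (aevalDegreeLT F α (m + 1))
  have hB := sum_card_denominators (aevalDegreeLT F α m)
  rw [card_aevalDegreeLT (by omega)] at hA hB
  set q := Nat.card F
  set V : ℕ → K → ℕ := fun k u => Nat.card (denominators (aevalDegreeLT F α k) u)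
  have hstep (u : K) : (V (m + 1) u : ℤ) - q * V m u =
      (1 - q) * if denominators (aevalDegreeLT F α (m + 1)) u = ⊥ then 1 else 0 := by
    split_ifs with h
    · have h' : denominators (aevalDegreeLT F α m) u = ⊥ :=
        le_bot_iff.1 (h ▸ denominators_mono (aevalDegreeLT_mono m.le_succ) u)
      simp [V, h, h']
    · simp only [V, card_denominators_succ hm h]
      push_cast
      ring
  have hsum : ∑ u, (V (m + 1) u : ℤ) - q * ∑ u, (V m u : ℤ) =
      (1 - q) * Nat.card {u : K // denominators (aevalDegreeLT F α (m + 1)) u = ⊥} := by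
    rw [Finset.mul_sum, ← Finset.sum_sub_distrib, Finset.sum_congr rfl fun u _ => hstep u,
      ← Finset.mul_sum, Finset.sum_boole, Nat.card_eq_fintype_card, Fintype.card_subtype]
  have : Finite F := Finite.of_injective _ (algebraMap F K).injective
  have hq : (q : ℤ) - 1 ≠ 0 := by
    have : 1 < q := Finite.one_lt_card
    omega
  refine Nat.cast_injective (R := ℤ) (mul_left_cancel₀ hq ?_)
  zify at hA hB
  push_cast
  linear_combination hsum - hA + q * hB

end Counting

def pairEquivRatio (P : K → Prop) :
    {v : Fin 2 → K // v 0 ≠ 0 ∧ P (v 1 / v 0)} ≃ {x : K // x ≠ 0} × {u : K // P u} where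
  toFun v := (⟨v.1 0, v.2.1⟩, ⟨v.1 1 / v.1 0, v.2.2⟩)
  invFun x := ⟨![x.1, x.2 * x.1], by simpa [x.1.2] using x.2.2⟩
  left_inv v := by
    ext i
    fin_cases i <;> simp [div_mul_cancel₀ _ v.2.1]
  right_inv x := by
    ext <;> simp [x.1.2]

end

/-- The number of pairs (v₁,v₂) such that
(v₁, v₂, αv₁, αv₂, ..., α^{n-1}v₁, α^{n-1}v₂) is an F_q-basis of F_{q^{2n}}
equals q^{2n-1}(q-1)(q^{2n}-1). -/
theorem stmt_6 (F : Type*) [Field F] [Fintype F] (q : ℕ) (hq : q = Fintype.card F)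
    (n : ℕ) (hn : 0 < n)
    (K : Type*) [Field K] [Algebra F K] [FiniteDimensional F K]
    (hK : Module.finrank F K = 2 * n)
    (f : Polynomial F) (hf : f.Monic) (hirr : Irreducible f)
    (hdeg : f.natDegree = 2 * n)
    (α : K) (hα : Polynomial.aeval α f = 0) :
    Nat.card {v : Fin 2 → K //
        ∃ b : Module.Basis (Fin n × Fin 2) F K,
          ∀ p : Fin n × Fin 2, b p = α ^ (p.1 : ℕ) * v p.2} =
      q ^ (2 * n - 1) * (q - 1) * (q ^ (2 * n) - 1) := by
  obtain ⟨m, rfl⟩ : ∃ m, n = m + 1 := ⟨n - 1, by omega⟩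
  have : Finite K := Module.finite_of_finite F
  have : Fintype K := Fintype.ofFinite K
  have hdegα : (minpoly F α).natDegree = 2 * (m + 1) := by
    rw [← minpoly.eq_of_irreducible_of_monic hirr hα hf, hdeg]
  have hcardK : Nat.card K = q ^ (2 * (m + 1)) := by
    rw [natCard_eq_pow_finrank (K := F), hK, hq, Nat.card_eq_fintype_card]
  have hbasis (v : Fin 2 → K) :
      (∃ b : Basis (Fin (m + 1) × Fin 2) F K, ∀ p, b p = α ^ (p.1 : ℕ) * v p.2) ↔
        v 0 ≠ 0 ∧ denominators (aevalDegreeLT F α (m + 1)) (v 1 / v 0) = ⊥ := by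
    rw [exists_basis_eq_iff_linearIndependent (by simp [hK, mul_comm]),
      linearIndependent_mul_pair_iff (linearIndependent_pow_of_le_natDegree_minpoly (by omega)),
      aevalDegreeLT_eq_span]
  have hgood : Nat.card {u : K // denominators (aevalDegreeLT F α (m + 1)) u = ⊥} =
      q ^ (2 * m + 1) * (q - 1) := by
    have := card_denominators_eq_bot_add (F := F) (α := α) (m := m) (by omega)
    rw [hcardK, Nat.card_eq_fintype_card (α := F), ← hq] at this
    rw [Nat.mul_sub, mul_one, ← pow_succ, show 2 * m + 1 + 1 = 2 * (m + 1) by ring]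
    omega
  rw [Nat.card_congr ((Equiv.subtypeEquivRight hbasis).trans
      (pairEquivRatio (denominators (aevalDegreeLT F α (m + 1)) · = ⊥))),
    Nat.card_prod, ← Nat.card_congr unitsEquivNeZero, Nat.card_units, hcardK, hgood,
    show 2 * (m + 1) - 1 = 2 * m + 1 by omega]
  ring
end

section
/- Let α ∈ F_{q^{mn}} with F_q(α) = F_{q^{mn}}. Then the F_q-span of {α^{in} : 0 ≤ i ≤ m-1} is an m-dimensional α-splitting subspace of F_{q^{mn}}. In particular, an m-dimensional α-splitting subspace exists. -/
/-!
Since `F[α] = K`, the powers `α ^ k`, `k < mn`, form an `F`-basis of `K`. Writing `k = j + n i`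
with `i < m`, `j < n` splits this basis into `n` blocks, and `α ^ j • W` is exactly the span of
the `j`-th block; a basis cut into blocks decomposes the space as the direct sum of their spans.
-/

open Submodule

section FiberSpans

variable {R M ι κ : Type*} [Ring R] [AddCommGroup M] [Module R M]

theorem LinearIndependent.iSupIndep_span_fiber {v : ι × κ → M} (hv : LinearIndependent R v) :
    iSupIndep fun j : κ => span R (Set.range fun i : ι => v (i, j)) := by
  intro j
  have hfiber : ∀ k, Set.range (fun i : ι => v (i, k)) = v '' {p | p.2 = k} := by
    intro k
    ext x
    simp [eq_comm]
  have hle : ⨆ (k) (_ : k ≠ j), span R (Set.range fun i : ι => v (i, k)) ≤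
      span R (v '' {p | p.2 ≠ j}) :=
    iSup₂_le fun k hk => span_mono <| (hfiber k).le.trans <|
      Set.image_mono fun p (hp : p.2 = k) => (hp.trans_ne hk : p.2 ≠ j)
  refine (hv.disjoint_span_image ?_).mono (span_mono (hfiber j).le) hle
  exact Set.disjoint_left.mpr fun p hp hp' => hp' hp

theorem Module.Basis.isInternal_span_fiber [DecidableEq κ] (b : Module.Basis (ι × κ) R M) :
    DirectSum.IsInternal fun j : κ => span R (Set.range fun i : ι => b (i, j)) := by
  refine DirectSum.isInternal_submodule_of_iSupIndep_of_iSup_eq_top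
    b.linearIndependent.iSupIndep_span_fiber ?_
  rw [iSup_span, ← b.span_eq]
  congr 1
  ext x
  simp only [Set.mem_iUnion, Set.mem_range, Prod.exists]
  exact exists_comm

end FiberSpans

section PowerBasis

variable {F K : Type*} [Field F] [Field K] [Algebra F K]

noncomputable def PowerBasis.basisFinProd {m n : ℕ} (pb : PowerBasis F K) (h : pb.dim = m * n) :
    Module.Basis (Fin m × Fin n) F K :=
  (pb.basis.reindex (finCongr h)).reindex finProdFinEquiv.symm

theorem PowerBasis.basisFinProd_apply {m n : ℕ} (pb : PowerBasis F K) (h : pb.dim = m * n)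
    (i : Fin m) (j : Fin n) : pb.basisFinProd h (i, j) = pb.gen ^ ((j : ℕ) + n * i) := by
  simp [basisFinProd, finProdFinEquiv]

end PowerBasis

theorem map_mulLeft_span_pow {R A : Type*} [CommSemiring R] [CommSemiring A] [Algebra R A]
    {m : ℕ} (n j : ℕ) (α : A) :
    (span R (Set.range fun i : Fin m => α ^ ((i : ℕ) * n))).map (LinearMap.mulLeft R (α ^ j)) =
      span R (Set.range fun i : Fin m => α ^ (j + n * i)) := by
  rw [map_span, ← Set.range_comp]
  congr 1
  ext i
  simp [pow_add, mul_comm n]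

theorem stmt_14_general (F : Type*) [Field F]
    (m n : ℕ) (hn : 0 < n)
    (K : Type*) [Field K] [Algebra F K] [FiniteDimensional F K]
    (hK : Module.finrank F K = m * n)
    (α : K) (hα : Algebra.adjoin F {α} = ⊤) :
    (Module.finrank F
        (Submodule.span F (Set.range fun i : Fin m => α ^ ((i : ℕ) * n))) = m ∧
      DirectSum.IsInternal (fun i : Fin n =>
        (Submodule.span F (Set.range fun i : Fin m => α ^ ((i : ℕ) * n))).map
          (LinearMap.mulLeft F (α ^ (i : ℕ))))) ∧
    ∃ W : Submodule F K, Module.finrank F W = m ∧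
      DirectSum.IsInternal (fun i : Fin n =>
        W.map (LinearMap.mulLeft F (α ^ (i : ℕ)))) := by
  set pb := PowerBasis.ofAdjoinEqTop (Algebra.IsIntegral.isIntegral α) hα
  have hdim : pb.dim = m * n := by rw [← pb.finrank, hK]
  set b := pb.basisFinProd hdim
  set W := span F (Set.range fun i : Fin m => α ^ ((i : ℕ) * n))
  have hblock (j : Fin n) :
      W.map (LinearMap.mulLeft F (α ^ (j : ℕ))) = span F (Set.range fun i => b (i, j)) := by
    simp only [W, map_mulLeft_span_pow, b, pb.basisFinProd_apply, pb, PowerBasis.ofAdjoinEqTop_gen]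
  have hfinrank : Module.finrank F W = m := by
    have hW := hblock ⟨0, hn⟩
    simp only [pow_zero, LinearMap.mulLeft_one, map_id] at hW
    rw [hW]
    exact (finrank_span_eq_card (b.linearIndependent.comp _ (Prod.mk_left_injective _))).trans
      (Fintype.card_fin m)
  have hsplit := b.isInternal_span_fiber
  simp only [← hblock] at hsplit
  exact ⟨⟨hfinrank, hsplit⟩, W, hfinrank, hsplit⟩

/-- The F_q-span of {α^{in} : 0 ≤ i ≤ m-1} is an m-dimensional
α-splitting subspace of F_{q^{mn}}; in particular such a subspace exists. -/
theorem stmt_14 (F : Type*) [Field F] [Fintype F]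
    (m n : ℕ) (hm : 0 < m) (hn : 0 < n)
    (K : Type*) [Field K] [Algebra F K] [FiniteDimensional F K]
    (hK : Module.finrank F K = m * n)
    (α : K) (hα : Algebra.adjoin F {α} = ⊤) :
    (Module.finrank F
        (Submodule.span F (Set.range fun i : Fin m => α ^ ((i : ℕ) * n))) = m ∧
      DirectSum.IsInternal (fun i : Fin n =>
        (Submodule.span F (Set.range fun i : Fin m => α ^ ((i : ℕ) * n))).map
          (LinearMap.mulLeft F (α ^ (i : ℕ))))) ∧
    ∃ W : Submodule F K, Module.finrank F W = m ∧
      DirectSum.IsInternal (fun i : Fin n =>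
        W.map (LinearMap.mulLeft F (α ^ (i : ℕ)))) :=
  stmt_14_general F m n hn K hK α hα
end

section
/- Let α ∈ F_{q^{mn}} with F_q(α) = F_{q^{mn}}, and for x ∈ F_{q^{mn}}^* let S_α^x denote the set of m-dimensional α-splitting subspaces containing x. Then |S_α^x| = |S_α^y| for all nonzero x, y, and the total number S_α of m-dimensional α-splitting subspaces satisfies |S_α| = |S_α^x| · (q^{mn}-1)/(q^m-1). -/
open Polynomial

section Aux

variable {F K : Type*} [Field F] [Field K] [Algebra F K]

private noncomputable def mulLEquiv (β : K) (hβ : β ≠ 0) : K ≃ₗ[F] K :=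
  LinearEquiv.ofLinear (LinearMap.mulLeft F β) (LinearMap.mulLeft F β⁻¹)
    (by ext x; simp [← mul_assoc, mul_inv_cancel₀ hβ])
    (by ext x; simp [← mul_assoc, inv_mul_cancel₀ hβ])

private lemma map_mulLEquiv (β : K) (hβ : β ≠ 0) (W : Submodule F K) :
    W.map (mulLEquiv (F := F) β hβ : K →ₗ[F] K) = W.map (LinearMap.mulLeft F β) := rfl

private lemma map_mulLeft_map_mulLeft (β γ : K) (W : Submodule F K) :
    (W.map (LinearMap.mulLeft F β)).map (LinearMap.mulLeft F γ) =
      (W.map (LinearMap.mulLeft F γ)).map (LinearMap.mulLeft F β) := by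
  rw [← Submodule.map_comp, ← Submodule.map_comp, ← LinearMap.mulLeft_mul, ← LinearMap.mulLeft_mul,
    mul_comm]

private lemma isInternal_map {n : ℕ} (α β : K) (hβ : β ≠ 0) (W : Submodule F K)
    (h : DirectSum.IsInternal fun i : Fin n => W.map (LinearMap.mulLeft F (α ^ (i : ℕ)))) :
    DirectSum.IsInternal fun i : Fin n =>
      (W.map (LinearMap.mulLeft F β)).map (LinearMap.mulLeft F (α ^ (i : ℕ))) := by
  rw [DirectSum.isInternal_submodule_iff_iSupIndep_and_iSup_eq_top] at h ⊢
  have key : ∀ i : Fin n,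
      (W.map (LinearMap.mulLeft F β)).map (LinearMap.mulLeft F (α ^ (i : ℕ))) =
        Submodule.orderIsoMapComap (mulLEquiv (F := F) β hβ)
          (W.map (LinearMap.mulLeft F (α ^ (i : ℕ)))) := fun i => by
    rw [map_mulLeft_map_mulLeft]
    rfl
  constructor
  · have := h.1.map_orderIso (Submodule.orderIsoMapComap (mulLEquiv (F := F) β hβ))
    simpa only [Function.comp_def, ← key] using this
  · calc ⨆ i : Fin n, (W.map (LinearMap.mulLeft F β)).map (LinearMap.mulLeft F (α ^ (i : ℕ)))
        = ⨆ i : Fin n, (W.map (LinearMap.mulLeft F (α ^ (i : ℕ)))).map (LinearMap.mulLeft F β) := by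
          simp_rw [map_mulLeft_map_mulLeft]
      _ = (⨆ i : Fin n, W.map (LinearMap.mulLeft F (α ^ (i : ℕ)))).map (LinearMap.mulLeft F β) :=
          (Submodule.map_iSup _ _).symm
      _ = ⊤ := by
          rw [h.2, Submodule.map_top, LinearMap.range_eq_top]
          intro z
          exact ⟨β⁻¹ * z, by simp [LinearMap.mulLeft_apply, ← mul_assoc, mul_inv_cancel₀ hβ]⟩

private lemma pred_map {m n : ℕ} (α β : K) (hβ : β ≠ 0) (W : Submodule F K)
    (h : Module.finrank F W = m ∧ DirectSum.IsInternal fun i : Fin n =>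
      W.map (LinearMap.mulLeft F (α ^ (i : ℕ)))) :
    Module.finrank F (W.map (LinearMap.mulLeft F β)) = m ∧
      DirectSum.IsInternal fun i : Fin n =>
        (W.map (LinearMap.mulLeft F β)).map (LinearMap.mulLeft F (α ^ (i : ℕ))) := by
  refine ⟨?_, isInternal_map α β hβ W h.2⟩
  rw [← map_mulLEquiv β hβ, LinearEquiv.finrank_map_eq, h.1]

private lemma map_map_inv (β γ : K) (h : γ * β = 1) (W : Submodule F K) :
    (W.map (LinearMap.mulLeft F β)).map (LinearMap.mulLeft F γ) = W := by
  rw [← Submodule.map_comp, ← LinearMap.mulLeft_mul, h, LinearMap.mulLeft_one, Submodule.map_id]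

private lemma card_scale {m n : ℕ} (α x y : K) (hx : x ≠ 0) (hy : y ≠ 0) :
    Nat.card {W : Submodule F K //
        (Module.finrank F W = m ∧
          DirectSum.IsInternal (fun i : Fin n =>
            W.map (LinearMap.mulLeft F (α ^ (i : ℕ))))) ∧ x ∈ W} =
    Nat.card {W : Submodule F K //
        (Module.finrank F W = m ∧
          DirectSum.IsInternal (fun i : Fin n =>
            W.map (LinearMap.mulLeft F (α ^ (i : ℕ))))) ∧ y ∈ W} := by
  apply Nat.card_congr
  have hβ : y * x⁻¹ ≠ 0 := mul_ne_zero hy (inv_ne_zero hx)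
  have hβ' : x * y⁻¹ ≠ 0 := mul_ne_zero hx (inv_ne_zero hy)
  have hββ' : (x * y⁻¹) * (y * x⁻¹) = 1 := by field_simp
  have hβ'β : (y * x⁻¹) * (x * y⁻¹) = 1 := by field_simp
  refine
    { toFun := fun W => ⟨W.1.map (LinearMap.mulLeft F (y * x⁻¹)),
        pred_map α _ hβ _ W.2.1, ⟨x, W.2.2, by
          simp only [LinearMap.mulLeft_apply]
          rw [mul_assoc, inv_mul_cancel₀ hx, mul_one]⟩⟩
      invFun := fun W => ⟨W.1.map (LinearMap.mulLeft F (x * y⁻¹)),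
        pred_map α _ hβ' _ W.2.1, ⟨y, W.2.2, by
          simp only [LinearMap.mulLeft_apply]
          rw [mul_assoc, inv_mul_cancel₀ hy, mul_one]⟩⟩
      left_inv := fun W => Subtype.ext (map_map_inv _ _ hββ' W.1)
      right_inv := fun W => Subtype.ext (map_map_inv _ _ hβ'β W.1) }

private lemma count_aux [Fintype F] [Finite K] (m q : ℕ) (hq : q = Fintype.card F)
    (P : Submodule F K → Prop)
    (hdim : ∀ W, P W → Module.finrank F W = m)
    (c : ℕ) (hc : ∀ z : K, z ≠ 0 → Nat.card {W : Submodule F K // P W ∧ z ∈ W} = c) :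
    Nat.card {W : Submodule F K // P W} * (q ^ m - 1) = c * (Nat.card K - 1) := by
  classical
  letI : Fintype K := Fintype.ofFinite K
  have hsub : Finite (Submodule F K) :=
    Finite.of_injective (fun W : Submodule F K => (W : Set K)) SetLike.coe_injective
  letI : Fintype (Submodule F K) := Fintype.ofFinite _
  have E : (Σ W : {W : Submodule F K // P W}, {z : K // z ∈ W.1 ∧ z ≠ 0}) ≃
      (Σ z : {z : K // z ≠ 0}, {W : Submodule F K // P W ∧ z.1 ∈ W}) :=
    { toFun := fun p => ⟨⟨p.2.1, p.2.2.2⟩, ⟨p.1.1, p.1.2, p.2.2.1⟩⟩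
      invFun := fun p => ⟨⟨p.2.1, p.2.2.1⟩, ⟨p.1.1, p.2.2.2, p.1.2⟩⟩
      left_inv := fun p => rfl
      right_inv := fun p => rfl }
  have cardfiber : ∀ W : {W : Submodule F K // P W},
      Fintype.card {z : K // z ∈ W.1 ∧ z ≠ 0} = q ^ m - 1 := by
    intro W
    have e1 : {z : K // z ∈ W.1 ∧ z ≠ 0} ≃ {z : W.1 // ¬ z = 0} :=
      { toFun := fun z => ⟨⟨z.1, z.2.1⟩, fun h => z.2.2 (by simpa using congrArg Subtype.val h)⟩
        invFun := fun z => ⟨z.1.1, z.1.2, fun h => z.2 (Subtype.ext h)⟩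
        left_inv := fun z => rfl
        right_inv := fun z => rfl }
    rw [Fintype.card_congr e1, Fintype.card_subtype_compl, Fintype.card_subtype_eq (0 : W.1)]
    congr 1
    rw [Module.card_eq_pow_finrank (K := F) (V := W.1), hdim W.1 W.2, hq]
  have cardfiber2 : ∀ z : {z : K // z ≠ 0},
      Fintype.card {W : Submodule F K // P W ∧ z.1 ∈ W} = c := by
    intro z
    rw [← Nat.card_eq_fintype_card]
    exact hc z.1 z.2
  have hA : Fintype.card (Σ W : {W : Submodule F K // P W}, {z : K // z ∈ W.1 ∧ z ≠ 0}) =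
      Nat.card {W : Submodule F K // P W} * (q ^ m - 1) := by
    rw [Fintype.card_sigma, Finset.sum_congr rfl (fun W _ => cardfiber W), Finset.sum_const,
      Finset.card_univ, smul_eq_mul, Nat.card_eq_fintype_card]
  have hB : Fintype.card (Σ z : {z : K // z ≠ 0}, {W : Submodule F K // P W ∧ z.1 ∈ W}) =
      (Fintype.card K - 1) * c := by
    rw [Fintype.card_sigma, Finset.sum_congr rfl (fun z _ => cardfiber2 z), Finset.sum_const,
      Finset.card_univ, smul_eq_mul]
    congr 1
    rw [Fintype.card_congr (Equiv.subtypeEquivRight (fun z : K => Iff.rfl) :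
        {z : K // z ≠ 0} ≃ {z : K // ¬ z = 0}), Fintype.card_subtype_compl,
      Fintype.card_subtype_eq (0 : K)]
  rw [← hA, Fintype.card_congr E, hB, Nat.card_eq_fintype_card, mul_comm]

end Aux

/-- |S_α^x| = |S_α^y| for all nonzero x,y, and
|S_α| (q^m - 1) = |S_α^x| (q^{mn} - 1), where S_α is the set of m-dimensional
α-splitting subspaces and S_α^x those containing x. -/
theorem stmt_15 (F : Type*) [Field F] [Fintype F] (q : ℕ) (hq : q = Fintype.card F)
    (m n : ℕ) (hm : 0 < m) (hn : 0 < n)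
    (K : Type*) [Field K] [Algebra F K] [FiniteDimensional F K]
    (hK : Module.finrank F K = m * n)
    (α : K) (hα : Algebra.adjoin F {α} = ⊤) :
    (∀ x y : K, x ≠ 0 → y ≠ 0 →
      Nat.card {W : Submodule F K //
          (Module.finrank F W = m ∧
            DirectSum.IsInternal (fun i : Fin n =>
              W.map (LinearMap.mulLeft F (α ^ (i : ℕ))))) ∧ x ∈ W} =
      Nat.card {W : Submodule F K //
          (Module.finrank F W = m ∧
            DirectSum.IsInternal (fun i : Fin n =>
              W.map (LinearMap.mulLeft F (α ^ (i : ℕ))))) ∧ y ∈ W}) ∧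
    (∀ x : K, x ≠ 0 →
      Nat.card {W : Submodule F K //
          Module.finrank F W = m ∧
            DirectSum.IsInternal (fun i : Fin n =>
              W.map (LinearMap.mulLeft F (α ^ (i : ℕ))))} * (q ^ m - 1) =
      Nat.card {W : Submodule F K //
          (Module.finrank F W = m ∧
            DirectSum.IsInternal (fun i : Fin n =>
              W.map (LinearMap.mulLeft F (α ^ (i : ℕ))))) ∧ x ∈ W} *
        (q ^ (m * n) - 1)) := by
  have hKfin : Finite K := Module.finite_of_finite F
  constructor
  · intro x y hx hy
    exact card_scale α x y hx hy
  · intro x hx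
    have hcard : Nat.card K = q ^ (m * n) := by
      letI : Fintype K := Fintype.ofFinite K
      rw [Nat.card_eq_fintype_card, Module.card_eq_pow_finrank (K := F) (V := K), hK, hq]
    have := count_aux (F := F) (K := K) m q hq
      (fun W => Module.finrank F W = m ∧ DirectSum.IsInternal (fun i : Fin n =>
        W.map (LinearMap.mulLeft F (α ^ (i : ℕ)))))
      (fun W hW => hW.1)
      (Nat.card {W : Submodule F K //
          (Module.finrank F W = m ∧
            DirectSum.IsInternal (fun i : Fin n =>
              W.map (LinearMap.mulLeft F (α ^ (i : ℕ))))) ∧ x ∈ W})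
      (fun z hz => card_scale α z x hz hx)
    rw [this, hcard]
end

section
/- Let α ∈ F_{q^{mn}} with F_q(α) = F_{q^{mn}}, and let N(α,m,n;q) be the number of m-tuples (v_1,...,v_m) such that (v_1,...,v_m, αv_1,...,αv_m, ..., α^{n-1}v_1,...,α^{n-1}v_m) is an F_q-basis of F_{q^{mn}}. Then ((q-2)q^{mn}+1)/(q-1) · q^{mn(m-1)} ≤ N(α,m,n;q) ≤ ∏_{i=0}^{m-1}(q^{mn} - q^i). -/
/-!
A family of `m * n = dim_F K` vectors is a basis as soon as it spans. If the family `(αⁱ vⱼ)`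
does not span, some nonzero functional `φ` kills it, and then so do the `q - 1` nonzero
multiples of `φ`. Conversely, for a fixed `φ ≠ 0` the functionals `x ↦ φ (αⁱ x)`, `i < n`, are
linearly independent (the powers `αⁱ` are, and `β ↦ φ (β * ·)` is injective because `K` is a
field), so the tuples they kill form a space of dimension `(m n - n) m`. Double counting the
pairs `(v, φ)` bounds the number of non-spanning tuples by `(q^{mn} - 1) q^{mn(m-1)} / (q - 1)`,
which gives the lower bound. The upper bound holds because `v` itself must be linearly
independent.
-/

open Module Submodule

theorem exists_basis_eq_iff_span_eq_top {F V ι : Type*} [Field F] [AddCommGroup V] [Module F V]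
    [Fintype ι] {f : ι → V} (hf : Fintype.card ι = finrank F V) :
    (∃ b : Basis ι F V, ∀ i, b i = f i) ↔ span F (Set.range f) = ⊤ := by
  constructor
  · rintro ⟨b, hb⟩
    rw [← funext hb, b.span_eq]
  · intro hspan
    exact ⟨basisOfTopLeSpanOfCardEqFinrank f hspan.ge hf, by simp⟩

theorem finrank_dualCoannihilator_span_eq {F V ι : Type*} [Field F] [AddCommGroup V] [Module F V]
    [FiniteDimensional F V] [Fintype ι] {ψ : ι → Dual F V} (hψ : LinearIndependent F ψ) :
    finrank F (span F (Set.range ψ)).dualCoannihilator = finrank F V - Fintype.card ι := by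
  have := Subspace.finrank_add_finrank_dualCoannihilator_eq (span F (Set.range ψ))
  rw [finrank_span_eq_card hψ] at this
  omega

section FieldExtension

variable {F K : Type*} [Field F] [Field K] [Algebra F K]

theorem injective_mul_compr₂_of_ne_zero {φ : Dual F K} (hφ : φ ≠ 0) :
    Function.Injective ((LinearMap.mul F K).compr₂ φ) := by
  refine (injective_iff_map_eq_zero _).2 fun β hβ => by_contra fun hβ0 => hφ ?_
  ext x
  simpa [hβ0] using LinearMap.congr_fun hβ (β⁻¹ * x)

theorem linearIndependent_pow_of_le_natDegree {α : K} {n : ℕ}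
    (hn : n ≤ (minpoly F α).natDegree) :
    LinearIndependent F fun i : Fin n => α ^ (i : ℕ) := by
  simpa [Function.comp_def] using (linearIndependent_pow α).comp _ (Fin.castLE_injective hn)

theorem card_forall_dual_pow_mul_eq_zero [Fintype F] [FiniteDimensional F K] {φ : Dual F K}
    (hφ : φ ≠ 0) {α : K} {n : ℕ} (hn : n ≤ (minpoly F α).natDegree) :
    Nat.card {x : K // ∀ i : Fin n, φ (α ^ (i : ℕ) * x) = 0} =
      Fintype.card F ^ (finrank F K - n) := by
  set ψ : Fin n → Dual F K := fun i => (LinearMap.mul F K).compr₂ φ (α ^ (i : ℕ))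
  have hψ : LinearIndependent F ψ := (linearIndependent_pow_of_le_natDegree hn).map'
    _ (LinearMap.ker_eq_bot.2 (injective_mul_compr₂_of_ne_zero hφ))
  have e : {x : K // ∀ i : Fin n, φ (α ^ (i : ℕ) * x) = 0} ≃
      (span F (Set.range ψ)).dualCoannihilator :=
    Equiv.subtypeEquivRight fun x => by
      rw [← SetLike.mem_coe, coe_dualCoannihilator_span]
      simp [ψ]
  rw [Nat.card_congr e, natCard_eq_pow_finrank (K := F), finrank_dualCoannihilator_span_eq hψ,
    Fintype.card_fin, Nat.card_eq_fintype_card]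

def powMulFamily {ι : Type*} (α : K) (n : ℕ) (v : ι → K) : Fin n × ι → K :=
  fun p => α ^ (p.1 : ℕ) * v p.2

theorem LinearIndependent.of_powMulFamily {ι : Type*} {α : K} {n : ℕ} {v : ι → K}
    (h : LinearIndependent F (powMulFamily α n v)) (hn : 0 < n) : LinearIndependent F v := by
  simpa [Function.comp_def, powMulFamily] using
    h.comp _ (Prod.mk_right_injective (⟨0, hn⟩ : Fin n))

theorem card_forall_dual_powMulFamily_eq_zero [Fintype F] [FiniteDimensional F K]
    {ι : Type*} [Fintype ι] {φ : Dual F K} (hφ : φ ≠ 0) {α : K} {n : ℕ}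
    (hn : n ≤ (minpoly F α).natDegree) :
    Nat.card {v : ι → K // ∀ p, φ (powMulFamily α n v p) = 0} =
      Fintype.card F ^ ((finrank F K - n) * Fintype.card ι) := by
  have e : {v : ι → K // ∀ p, φ (powMulFamily α n v p) = 0} ≃
      (ι → {x : K // ∀ i : Fin n, φ (α ^ (i : ℕ) * x) = 0}) :=
    (Equiv.subtypeEquivRight fun v =>
      ⟨fun h j i => h (i, j), fun h (p : Fin n × ι) => h p.2 p.1⟩).trans Equiv.subtypePiEquivPi
  rw [Nat.card_congr e, Nat.card_pi, card_forall_dual_pow_mul_eq_zero hφ hn, Finset.prod_const,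
    Finset.card_univ, ← pow_mul]

theorem card_mul_card_span_powMulFamily_ne_top_le [Fintype F] [FiniteDimensional F K]
    {ι : Type*} [Fintype ι] {α : K} {n : ℕ} (hn : n ≤ (minpoly F α).natDegree) :
    (Fintype.card F - 1) *
        Nat.card {v : ι → K // span F (Set.range (powMulFamily α n v)) ≠ ⊤} ≤
      (Fintype.card F ^ finrank F K - 1) *
        Fintype.card F ^ ((finrank F K - n) * Fintype.card ι) := by
  classical
  have : Finite K := Module.finite_of_finite F
  have : Fintype K := Fintype.ofFinite K
  have : Fintype (Dual F K) := @Fintype.ofFinite _ (Module.finite_of_finite F)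
  let kills (v : ι → K) (φ : Dual F K) : Prop := ∀ p, φ (powMulFamily α n v p) = 0
  let bad := Finset.univ.filter fun v : ι → K => span F (Set.range (powMulFamily α n v)) ≠ ⊤
  let nonzero := (Finset.univ : Finset (Dual F K)).erase 0
  have hbad : ∀ v ∈ bad, Fintype.card F - 1 ≤ (nonzero.bipartiteAbove kills v).card := by
    intro v hv
    obtain ⟨φ, hφ, hle⟩ := (span F (Set.range (powMulFamily α n v))).exists_le_ker_of_lt_top
      (lt_top_iff_ne_top.2 (Finset.mem_filter.1 hv).2)
    rw [span_le] at hle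
    rw [← Finset.card_univ, ← Finset.card_erase_of_mem (Finset.mem_univ 0)]
    refine Finset.card_le_card_of_injOn (· • φ) (fun c hc => ?_)
      (smul_left_injective F hφ).injOn
    refine (Finset.mem_bipartiteAbove kills).2
      ⟨Finset.mem_erase.2 ⟨smul_ne_zero (Finset.ne_of_mem_erase hc) hφ, Finset.mem_univ _⟩,
        fun p => ?_⟩
    rw [LinearMap.smul_apply, hle (Set.mem_range_self p), smul_zero]
  have hnonzero : ∀ φ ∈ nonzero, (bad.bipartiteBelow kills φ).card ≤
      Fintype.card F ^ ((finrank F K - n) * Fintype.card ι) := by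
    intro φ hφ
    rw [← card_forall_dual_powMulFamily_eq_zero (Finset.ne_of_mem_erase hφ) hn,
      Nat.card_eq_fintype_card, Fintype.card_subtype]
    exact Finset.card_le_card (Finset.monotone_filter_left _ (Finset.subset_univ _))
  have hcard : nonzero.card = Fintype.card F ^ finrank F K - 1 := by
    rw [Finset.card_erase_of_mem (Finset.mem_univ 0), Finset.card_univ,
      card_eq_pow_finrank (K := F), Subspace.dual_finrank_eq]
  rw [Nat.card_eq_fintype_card, Fintype.card_subtype, mul_comm, ← hcard]
  exact Finset.card_mul_le_card_mul kills hbad hnonzero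

theorem le_card_span_powMulFamily_eq_top [Fintype F] [FiniteDimensional F K] {α : K} {m n : ℕ}
    (hm : 0 < m) (hK : finrank F K = m * n) (hn : n ≤ (minpoly F α).natDegree) :
    ((Fintype.card F - 2) * Fintype.card F ^ (m * n) + 1) * Fintype.card F ^ (m * n * (m - 1)) ≤
      (Fintype.card F - 1) *
        Nat.card {v : Fin m → K // span F (Set.range (powMulFamily α n v)) = ⊤} := by
  have : Finite K := Module.finite_of_finite F
  have hsplit : Nat.card {v : Fin m → K // span F (Set.range (powMulFamily α n v)) = ⊤} +
      Nat.card {v : Fin m → K // span F (Set.range (powMulFamily α n v)) ≠ ⊤} =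
        Fintype.card F ^ (m * n) * Fintype.card F ^ (m * n * (m - 1)) := by
    rw [← Nat.card_sum, Nat.card_congr (Equiv.sumCompl _), Nat.card_fun, Nat.card_fin,
      natCard_eq_pow_finrank (K := F), hK, Nat.card_eq_fintype_card, ← pow_mul, ← pow_add,
      add_comm, ← mul_add_one, Nat.sub_one_add_one hm.ne']
  have hbad := card_mul_card_span_powMulFamily_ne_top_le (ι := Fin m) hn
  rw [hK, Fintype.card_fin, ← Nat.sub_one_mul, show (m - 1) * n * m = m * n * (m - 1) by ring]
    at hbad
  have hq : 2 ≤ Fintype.card F := Fintype.one_lt_card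
  have hpow : 1 ≤ Fintype.card F ^ (m * n) := Nat.one_le_pow _ _ (by omega)
  zify [hq, hpow, (by omega : 1 ≤ Fintype.card F)] at hsplit hbad ⊢
  nlinarith

theorem card_exists_basis_powMulFamily_le [Fintype F] [FiniteDimensional F K] {α : K} {m n : ℕ}
    (hn : 0 < n) (hm : m ≤ finrank F K) :
    Nat.card {v : Fin m → K //
        ∃ b : Basis (Fin n × Fin m) F K, ∀ p, b p = powMulFamily α n v p} ≤
      ∏ i ∈ Finset.range m, (Fintype.card F ^ finrank F K - Fintype.card F ^ i) := by
  have : Finite K := Module.finite_of_finite F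
  calc _ ≤ Nat.card {v : Fin m → K // LinearIndependent F v} :=
        Nat.card_le_card_of_injective _ (Subtype.impEmbedding _ _ fun v ⟨b, hb⟩ =>
          (funext hb ▸ b.linearIndependent).of_powMulFamily hn).injective
    _ = _ := by
        rw [card_linearIndependent hm, Fin.prod_univ_eq_prod_range
          (fun i => Fintype.card F ^ finrank F K - Fintype.card F ^ i)]

end FieldExtension

theorem stmt_16_general (F : Type*) [Field F] [Fintype F] (q : ℕ) (hq : q = Fintype.card F)
    (m n : ℕ)
    (K : Type*) [Field K] [Algebra F K] [FiniteDimensional F K]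
    (hK : Module.finrank F K = m * n)
    (α : K) (hα : Algebra.adjoin F {α} = ⊤) :
    ((q - 2) * q ^ (m * n) + 1) * q ^ (m * n * (m - 1)) ≤
        (q - 1) * Nat.card {v : Fin m → K //
            ∃ b : Module.Basis (Fin n × Fin m) F K,
              ∀ p : Fin n × Fin m, b p = α ^ (p.1 : ℕ) * v p.2} ∧
      Nat.card {v : Fin m → K //
          ∃ b : Module.Basis (Fin n × Fin m) F K,
            ∀ p : Fin n × Fin m, b p = α ^ (p.1 : ℕ) * v p.2} ≤
        ∏ i ∈ Finset.range m, (q ^ (m * n) - q ^ i) := by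
  subst hq
  have hmn : 0 < m * n := hK ▸ finrank_pos
  have hm : 0 < m := Nat.pos_of_mul_pos_right hmn
  have hn : 0 < n := Nat.pos_of_mul_pos_left hmn
  have hdeg : (minpoly F α).natDegree = m * n :=
    hK ▸ (PowerBasis.ofAdjoinEqTop (.of_finite F α) hα).finrank.symm
  have hcard : Fintype.card (Fin n × Fin m) = finrank F K := by simp [hK, mul_comm]
  have hgood := Nat.card_congr <| Equiv.subtypeEquivRight fun v : Fin m → K =>
    exists_basis_eq_iff_span_eq_top (f := powMulFamily α n v) hcard
  simp only [powMulFamily] at hgood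
  refine ⟨?_, hK ▸ card_exists_basis_powMulFamily_le hn (hK ▸ Nat.le_mul_of_pos_right m hn)⟩
  rw [hgood]
  exact le_card_span_powMulFamily_eq_top hm hK (hdeg ▸ Nat.le_mul_of_pos_left n hm)

/-- ((q-2)q^{mn}+1)/(q-1) · q^{mn(m-1)} ≤ N(α,m,n;q)
≤ ∏_{i=0}^{m-1}(q^{mn} - q^i); the lower bound is stated multiplied by (q-1). -/
theorem stmt_16 (F : Type*) [Field F] [Fintype F] (q : ℕ) (hq : q = Fintype.card F)
    (m n : ℕ) (hm : 0 < m) (hn : 0 < n)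
    (K : Type*) [Field K] [Algebra F K] [FiniteDimensional F K]
    (hK : Module.finrank F K = m * n)
    (α : K) (hα : Algebra.adjoin F {α} = ⊤) :
    ((q - 2) * q ^ (m * n) + 1) * q ^ (m * n * (m - 1)) ≤
        (q - 1) * Nat.card {v : Fin m → K //
            ∃ b : Module.Basis (Fin n × Fin m) F K,
              ∀ p : Fin n × Fin m, b p = α ^ (p.1 : ℕ) * v p.2} ∧
      Nat.card {v : Fin m → K //
          ∃ b : Module.Basis (Fin n × Fin m) F K,
            ∀ p : Fin n × Fin m, b p = α ^ (p.1 : ℕ) * v p.2} ≤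
        ∏ i ∈ Finset.range m, (q ^ (m * n) - q ^ i) :=
  stmt_16_general F q hq m n K hK α hα
end

section
/- Suppose there exist a, b ∈ F_q such that X^{2n} - aX - b is irreducible in F_q[X]. Then the number of nonsingular n×n Toeplitz matrices over F_q equals q^{2n-1} - q^{2n-2}. -/
/-!
An `n × n` Toeplitz matrix is `toeplitzOf n u` for a polynomial `u` of degree `< 2n`, unique up
to its constant term, and it maps the coefficient vector of `p` (of degree `< n`) to the
coefficients of `u * p` in degrees `n, …, 2n - 1`. Multiples of `f = X^(2n) - aX - b` of degree
`< 3n - 1` have no terms in these degrees, so the matrix is singular exactly when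
`u ≡ r / p (mod f)` for a fraction with `deg r, deg p < n`. Since `f` is irreducible of degree
`2n`, such residues `u` correspond bijectively to the reduced fractions `r / p` with `p` monic,
and sorting all fractions by the degree of `gcd r p` shows by induction that there are
`q^(2n-1)` reduced ones. Dividing by the `q` choices of the constant term of `u`, exactly
`q^(2n-2)` of the `q^(2n-1)` Toeplitz matrices are singular.
-/

open Polynomial
open scoped Matrix

theorem Nat.card_subtype_eq_sum_card_fiber {α : Type*} {P : α → Prop} [Finite {a // P a}]
    (f : α → ℕ) {m : ℕ} (hf : ∀ a, P a → f a < m) :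
    Nat.card {a // P a} = ∑ e ∈ Finset.range m, Nat.card {a // P a ∧ f a = e} := by
  classical
  have := Fintype.ofFinite {a // P a}
  rw [Nat.card_eq_fintype_card, ← Finset.card_univ,
    Finset.card_eq_sum_card_fiberwise fun a _ => Finset.mem_range.2 (hf a.1 a.2)]
  refine Finset.sum_congr rfl fun e _ => ?_
  rw [← Nat.card_congr (Equiv.subtypeSubtypeEquivSubtypeInter P (f · = e)),
    Nat.card_eq_fintype_card, Fintype.card_subtype]

namespace Polynomial

section Semiring

variable {R : Type*} [Semiring R]

theorem degree_mul_lt_add_sub_one {u p : R[X]} {a b : ℕ} (hu : u.degree < a)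
    (hp : p.degree < b) : (u * p).degree < ↑(a + b - 1) := by
  rcases eq_or_ne u 0 with rfl | hu0
  · simp
  rcases eq_or_ne p 0 with rfl | hp0
  · simp
  have hu' := (natDegree_lt_iff_degree_lt hu0).2 hu
  have hp' := (natDegree_lt_iff_degree_lt hp0).2 hp
  calc (u * p).degree ≤ u.degree + p.degree := degree_mul_le u p
    _ = ↑(u.natDegree + p.natDegree) := by
      rw [degree_eq_natDegree hu0, degree_eq_natDegree hp0]; rfl
    _ < ↑(a + b - 1) := by exact_mod_cast (show u.natDegree + p.natDegree < a + b - 1 by omega)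

theorem IsMonicOfDegree.degree_mul_lt_iff [Nontrivial R] {g r : R[X]} {e m : ℕ}
    (hg : IsMonicOfDegree g e) (he : e ≤ m) : (g * r).degree < m ↔ r.degree < ↑(m - e) := by
  rw [hg.monic.degree_mul_comm, hg.monic.degree_mul, degree_eq_natDegree hg.ne_zero,
    hg.natDegree_eq]
  cases r.degree with
  | bot => simp
  | coe d => simp only [Nat.cast_withBot, ← WithBot.coe_add, WithBot.coe_lt_coe]; omega

end Semiring

theorem isMonicOfDegree_X_pow_add_iff {R : Type*} [Ring R] [Nontrivial R] {h : R[X]} {e : ℕ} :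
    IsMonicOfDegree (X ^ e + h) e ↔ h.degree < e := by
  constructor
  · intro hp
    have hdeg : (X ^ e + h).degree = (e : WithBot ℕ) := by
      rw [degree_eq_natDegree hp.ne_zero, hp.natDegree_eq]
    have := degree_sub_lt_left (q := X ^ e) (by rw [hdeg, degree_X_pow]) hp.ne_zero
      (by rw [hp.leadingCoeff_eq, leadingCoeff_X_pow])
    rwa [add_sub_cancel_left, hdeg] at this
  · intro hh
    refine ⟨natDegree_eq_of_degree_eq_some ?_, monic_X_pow_add hh⟩
    rw [add_comm, degree_add_eq_right_of_degree_lt (by rwa [degree_X_pow]), degree_X_pow]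

theorem Monic.eq_of_mul_eq_mul_of_isCoprime {R : Type*} [CommRing R] [IsDomain R]
    {r p r' p' : R[X]} (hp : p.Monic) (hp' : p'.Monic) (h : IsCoprime r p)
    (h' : IsCoprime r' p') (heq : r * p' = r' * p) : r = r' ∧ p = p' := by
  have hpp' : p ∣ p' := h.symm.dvd_of_dvd_mul_left ⟨r', by rw [heq, mul_comm]⟩
  have hp'p : p' ∣ p := h'.symm.dvd_of_dvd_mul_left ⟨r, by rw [← heq, mul_comm]⟩
  obtain rfl := eq_of_monic_of_associated hp hp' (associated_of_dvd_dvd hpp' hp'p)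
  exact ⟨mul_right_cancel₀ hp.ne_zero heq, rfl⟩

section Field

variable {K : Type*} [Field K] [DecidableEq K]

theorem monic_gcd {r p : K[X]} (hp : p ≠ 0) : (gcd r p).Monic := by
  simpa using monic_normalize (gcd_ne_zero_of_right (a := r) hp)

theorem Monic.gcd_mul_of_isCoprime {g r p : K[X]} (hg : g.Monic) (h : IsCoprime r p) :
    gcd (g * r) (g * p) = g := by
  have hrp : gcd r p = 1 := by
    rw [← normalize_gcd, normalize_eq_one, gcd_isUnit_iff]
    exact h
  rw [gcd_mul_left, hrp, mul_one, hg.normalize_eq_self]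

theorem Monic.exists_eq_gcd_mul_isCoprime {r p : K[X]} (hp : p.Monic) :
    ∃ r' p', r = gcd r p * r' ∧ p = gcd r p * p' ∧ IsCoprime r' p' ∧ p'.Monic := by
  obtain ⟨r', p', hr, hp', hunit⟩ := extract_gcd r p
  exact ⟨r', p', hr, hp', (gcd_isUnit_iff _ _).1 hunit,
    (monic_gcd hp.ne_zero).of_mul_monic_left (hp' ▸ hp)⟩

end Field

end Polynomial

namespace ToeplitzCount

section Toeplitz

variable {R : Type*} {n : ℕ}

def IsToeplitz (A : Matrix (Fin n) (Fin n) R) : Prop :=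
  ∀ i j r s : Fin n, (i : ℤ) - (j : ℤ) = (r : ℤ) - (s : ℤ) → A i j = A r s

-- For `k < n` the truncated subtractions pick the entry `(0, n - 1 - k)` of the first row,
-- otherwise the entry `(k + 1 - n, 0)` of the first column.
variable (n) in
def toeplitzEquiv : (Fin (2 * n - 1) → R) ≃ {A : Matrix (Fin n) (Fin n) R // IsToeplitz A} where
  toFun c := ⟨Matrix.of fun i j => c ⟨n - 1 + i - j, by omega⟩,
    fun i j r s h => congrArg c (Fin.ext (by simp only; omega))⟩
  invFun A k := A.1 ⟨k + 1 - n, by omega⟩ ⟨n - 1 - k, by omega⟩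
  left_inv c := funext fun k => congrArg c (Fin.ext (by simp only; omega))
  right_inv A := Subtype.ext (Matrix.ext fun i j => A.2 _ _ _ _ (by simp only; omega))

theorem card_isToeplitz [Fintype R] (n : ℕ) :
    Nat.card {A : Matrix (Fin n) (Fin n) R // IsToeplitz A} = Fintype.card R ^ (2 * n - 1) := by
  rw [← Nat.card_congr (toeplitzEquiv n), Nat.card_fun, Nat.card_fin, Nat.card_eq_fintype_card]

variable [Semiring R]

-- `u.coeff k` plays the role of `c_k`; the constant term of `u` does not occur.
variable (n) in
def toeplitzOf (u : R[X]) : Matrix (Fin n) (Fin n) R :=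
  Matrix.of fun i j => u.coeff (n + i - j)

theorem isToeplitz_toeplitzOf (u : R[X]) : IsToeplitz (toeplitzOf n u) :=
  fun i j r s h => congrArg u.coeff (by omega)

theorem toeplitzOf_mulVec {u p : R[X]} (hp : p.degree < n) (i : Fin n) :
    (toeplitzOf n u *ᵥ fun j => p.coeff j) i = (u * p).coeff (n + i) := by
  have hp' : p = ∑ j : Fin n, monomial j (p.coeff j) := by
    rw [sum_fin _ (fun j => monomial_zero_right j) hp, sum_monomial_eq]
  conv_rhs => rw [hp', Finset.mul_sum, finsetSum_coeff]
  rw [Matrix.mulVec, dotProduct]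
  refine Finset.sum_congr rfl fun j _ => ?_
  rw [show n + (i : ℕ) = n + i - j + j by omega, coeff_mul_monomial]
  rfl

end Toeplitz

def HasCoeffGap {R : Type*} [Semiring R] (n : ℕ) (f : R[X]) : Prop :=
  ∀ w, f ∣ w → w.degree < ↑(3 * n - 1) → ∀ k, n ≤ k → k < 2 * n → w.coeff k = 0

section Trinomial

variable {R : Type*} [CommRing R] [Nontrivial R] {n : ℕ}

theorem isMonicOfDegree_trinomial (hn : 0 < n) (a b : R) :
    IsMonicOfDegree (X ^ (2 * n) - C a * X - C b) (2 * n) := by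
  rw [sub_sub]
  exact (isMonicOfDegree_X_pow R _).sub (natDegree_linear_le.trans_lt (by omega))

theorem hasCoeffGap_trinomial (a b : R) : HasCoeffGap n (X ^ (2 * n) - C a * X - C b) := by
  rintro _ ⟨g, rfl⟩ hdeg k hk hk'
  have hf := isMonicOfDegree_trinomial (by omega : 0 < n) a b
  rcases eq_or_ne g 0 with rfl | hg0
  · simp
  have hg : 2 * n + g.natDegree < 3 * n - 1 := by
    have := hf.monic.natDegree_mul' hg0
    rw [hf.natDegree_eq] at this
    rw [← this]
    exact (natDegree_lt_iff_degree_lt (hf.monic.mul_right_ne_zero hg0)).2 hdeg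
  have hlin : ((C a * X + C b) * g).natDegree < k :=
    (natDegree_mul_le.trans (Nat.add_le_add_right natDegree_linear_le _)).trans_lt (by omega)
  rw [show (X ^ (2 * n) - C a * X - C b) * g = X ^ (2 * n) * g - (C a * X + C b) * g by ring,
    coeff_sub, coeff_X_pow_mul', if_neg (by omega), coeff_eq_zero_of_natDegree_lt hlin, sub_zero]

end Trinomial

variable {F : Type*} [Field F] {n : ℕ}

def IsFraction (m : ℕ) (x : F[X] × F[X]) : Prop :=
  x.1.degree < m ∧ x.2.Monic ∧ x.2.degree < m

def IsReducedFraction (m : ℕ) (x : F[X] × F[X]) : Prop :=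
  IsFraction m x ∧ IsCoprime x.1 x.2

theorem not_isUnit_toeplitzOf_iff {u : F[X]} : ¬IsUnit (toeplitzOf n u) ↔
    ∃ p : F[X], p.Monic ∧ p.degree < n ∧ ∀ k, n ≤ k → k < 2 * n → (u * p).coeff k = 0 := by
  rw [Matrix.isUnit_iff_isUnit_det, isUnit_iff_ne_zero, not_not,
    ← Matrix.exists_mulVec_eq_zero_iff]
  constructor
  · rintro ⟨v, hv, hMv⟩
    set p := (degreeLTEquiv F n).symm v
    have hpv : (fun j : Fin n => (p : F[X]).coeff j) = v := (degreeLTEquiv F n).apply_symm_apply v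
    have hp0 : (p : F[X]) ≠ 0 := fun h => hv (by rw [← hpv, h]; rfl)
    refine ⟨p * C (p : F[X]).leadingCoeff⁻¹, monic_mul_leadingCoeff_inv hp0, ?_,
      fun k hk hk' => ?_⟩
    · rw [degree_mul_C (inv_ne_zero (leadingCoeff_ne_zero.2 hp0))]
      exact mem_degreeLT.1 p.2
    · obtain ⟨i, rfl⟩ : ∃ i : Fin n, k = n + i := ⟨⟨k - n, by omega⟩, by simp only; omega⟩
      rw [← mul_assoc, coeff_mul_C, ← toeplitzOf_mulVec (mem_degreeLT.1 p.2), hpv, hMv]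
      exact zero_mul _
  · rintro ⟨p, hp0, hp, hk⟩
    refine ⟨fun j => p.coeff j, fun h => hp0.ne_zero ?_, funext fun i => ?_⟩
    · exact congrArg Subtype.val
        ((degreeLTEquiv F n).map_eq_zero_iff (x := ⟨p, mem_degreeLT.2 hp⟩) |>.1 h)
    · rw [toeplitzOf_mulVec hp]
      exact hk _ (by omega) (by omega)

theorem forall_coeff_mul_eq_zero_iff_exists_dvd_sub {f : F[X]} (hf : IsMonicOfDegree f (2 * n))
    (hgap : HasCoeffGap n f) {u p : F[X]} (hu : u.degree < ↑(2 * n)) (hp : p.degree < n) :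
    (∀ k, n ≤ k → k < 2 * n → (u * p).coeff k = 0) ↔
      ∃ r : F[X], r.degree < n ∧ f ∣ u * p - r := by
  have hup : (u * p).degree < ↑(3 * n - 1) := by
    simpa [show 2 * n + n - 1 = 3 * n - 1 by omega] using degree_mul_lt_add_sub_one hu hp
  have h2n : ((2 * n : ℕ) : WithBot ℕ) ≤ ↑(3 * n - 1) := by exact_mod_cast (by omega)
  constructor
  · intro hk
    have hdeg : (u * p %ₘ f).degree < ↑(2 * n) := by
      rw [← hf.natDegree_eq, ← degree_eq_natDegree hf.ne_zero]
      exact degree_modByMonic_lt _ hf.monic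
    have hdvd : f ∣ u * p - u * p %ₘ f :=
      ⟨u * p /ₘ f, by linear_combination -modByMonic_add_div (u * p) f⟩
    refine ⟨u * p %ₘ f, ?_, hdvd⟩
    rw [degree_lt_iff_coeff_zero]
    intro k hk'
    by_cases hk2 : k < 2 * n
    · have := hgap _ hdvd ((degree_sub_le _ _).trans_lt (max_lt hup (hdeg.trans_le h2n))) k
        (by exact_mod_cast hk') hk2
      rwa [coeff_sub, hk k (by exact_mod_cast hk') hk2, zero_sub, neg_eq_zero] at this
    · exact coeff_eq_zero_of_degree_lt (hdeg.trans_le (by exact_mod_cast not_lt.1 hk2))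
  · rintro ⟨r, hr, hdvd⟩ k hk hk'
    have := hgap _ hdvd ((degree_sub_le _ _).trans_lt
      (max_lt hup (hr.trans_le (by exact_mod_cast (show n ≤ 3 * n - 1 by omega))))) k hk hk'
    rwa [coeff_sub, coeff_eq_zero_of_degree_lt (hr.trans_le (by exact_mod_cast hk)), sub_zero]
      at this

theorem not_isUnit_toeplitzOf_iff_exists_isFraction {f : F[X]} (hf : IsMonicOfDegree f (2 * n))
    (hgap : HasCoeffGap n f) {u : F[X]} (hu : u.degree < ↑(2 * n)) :
    ¬IsUnit (toeplitzOf n u) ↔ ∃ x, IsFraction n x ∧ f ∣ u * x.2 - x.1 := by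
  rw [not_isUnit_toeplitzOf_iff]
  constructor
  · rintro ⟨p, hp, hpd, hk⟩
    obtain ⟨r, hr, hdvd⟩ := (forall_coeff_mul_eq_zero_iff_exists_dvd_sub hf hgap hu hpd).1 hk
    exact ⟨(r, p), ⟨hr, hp, hpd⟩, hdvd⟩
  · rintro ⟨⟨r, p⟩, ⟨hr, hp, hpd⟩, hdvd⟩
    exact ⟨p, hp, hpd, (forall_coeff_mul_eq_zero_iff_exists_dvd_sub hf hgap hu hpd).2 ⟨r, hr, hdvd⟩⟩

theorem IsReducedFraction.eq_of_dvd_sub {f : F[X]} (hf : ↑(2 * n - 1) ≤ f.degree)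
    {x y : F[X] × F[X]} (hx : IsReducedFraction n x) (hy : IsReducedFraction n y)
    (h : f ∣ x.1 * y.2 - y.1 * x.2) : x = y := by
  rw [two_mul] at hf
  have hlt : (x.1 * y.2 - y.1 * x.2).degree < f.degree :=
    ((degree_sub_le _ _).trans_lt (max_lt (degree_mul_lt_add_sub_one hx.1.1 hy.1.2.2)
      (degree_mul_lt_add_sub_one hy.1.1 hx.1.2.2))).trans_le hf
  obtain ⟨h1, h2⟩ := hx.1.2.1.eq_of_mul_eq_mul_of_isCoprime hy.1.2.1 hx.2 hy.2
    (sub_eq_zero.1 (eq_zero_of_dvd_of_degree_lt h hlt))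
  exact Prod.ext h1 h2

theorem IsFraction.exists_isReducedFraction_dvd {f : F[X]} (hirr : Irreducible f)
    (hf : ↑n ≤ f.degree) {u : F[X]} {x : F[X] × F[X]} (hx : IsFraction n x)
    (h : f ∣ u * x.2 - x.1) : ∃ y, IsReducedFraction n y ∧ f ∣ u * y.2 - y.1 := by
  classical
  obtain ⟨r, p⟩ := x
  obtain ⟨hr, hp, hpd⟩ := hx
  dsimp only at hr hp hpd h
  obtain ⟨r', p', hr', hp', hcop, hpm'⟩ := hp.exists_eq_gcd_mul_isCoprime (r := r)
  have hg0 : gcd r p ≠ 0 := gcd_ne_zero_of_right hp.ne_zero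
  have hgf : ¬f ∣ gcd r p := fun hd => hg0 (eq_zero_of_dvd_of_degree_lt hd
    ((degree_le_of_dvd (gcd_dvd_right r p) hp.ne_zero).trans_lt (hpd.trans_le hf)))
  generalize gcd r p = g at hr' hp' hg0 hgf
  subst hr' hp'
  refine ⟨(r', p'), ⟨⟨(degree_le_mul_left r' hg0).trans_lt (by rwa [mul_comm]), hpm',
    (degree_le_mul_left p' hg0).trans_lt (by rwa [mul_comm])⟩, hcop⟩, ?_⟩
  rw [show u * (g * p') - g * r' = g * (u * p' - r') by ring] at h
  exact (hirr.prime.dvd_or_dvd h).resolve_left hgf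

theorem card_exists_isFraction_dvd {f : F[X]} (hf : IsMonicOfDegree f (2 * n))
    (hirr : Irreducible f) :
    Nat.card {u : F[X] // u.degree < ↑(2 * n) ∧ ∃ x, IsFraction n x ∧ f ∣ u * x.2 - x.1} =
      Nat.card {x : F[X] × F[X] // IsReducedFraction n x} := by
  have := Fact.mk hirr
  have hdegf : f.degree = ↑(2 * n) := by rw [degree_eq_natDegree hf.ne_zero, hf.natDegree_eq]
  have hmk {p : F[X]} (hp : p.Monic) (hpd : p.degree < n) : AdjoinRoot.mk f p ≠ 0 :=
    AdjoinRoot.mk_ne_zero_of_degree_lt hf.monic hp.ne_zero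
      (hpd.trans_le (by rw [hdegf]; exact_mod_cast (show n ≤ 2 * n by omega)))
  have hdvd_iff {u r p : F[X]} (hp : AdjoinRoot.mk f p ≠ 0) :
      f ∣ u * p - r ↔ AdjoinRoot.mk f u = AdjoinRoot.mk f r / AdjoinRoot.mk f p := by
    rw [← AdjoinRoot.mk_eq_mk, map_mul, eq_div_iff hp]
  have hdeg (z : AdjoinRoot f) : (AdjoinRoot.modByMonicHom hf.monic z).degree < ↑(2 * n) := by
    obtain ⟨u, rfl⟩ := AdjoinRoot.mk_surjective z
    rw [AdjoinRoot.modByMonicHom_mk, ← hdegf]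
    exact degree_modByMonic_lt _ hf.monic
  symm
  refine Nat.card_eq_of_bijective (fun x => ⟨AdjoinRoot.modByMonicHom hf.monic
      (AdjoinRoot.mk f x.1.1 / AdjoinRoot.mk f x.1.2), hdeg _, x.1, x.2.1,
      (hdvd_iff (hmk x.2.1.2.1 x.2.1.2.2)).2 (AdjoinRoot.mk_leftInverse hf.monic _)⟩) ⟨?_, ?_⟩
  · rintro ⟨x, hx⟩ ⟨y, hy⟩ h
    have h1 := congrArg (fun u => AdjoinRoot.mk f u.1) h
    simp only [AdjoinRoot.mk_leftInverse hf.monic _] at h1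
    rw [div_eq_div_iff (hmk hx.1.2.1 hx.1.2.2) (hmk hy.1.2.1 hy.1.2.2), ← map_mul, ← map_mul,
      AdjoinRoot.mk_eq_mk] at h1
    exact Subtype.ext (hx.eq_of_dvd_sub (by rw [hdegf]; exact_mod_cast (by omega)) hy h1)
  · rintro ⟨u, hu, x, hx, hdvd⟩
    obtain ⟨y, hy, hdvd'⟩ := hx.exists_isReducedFraction_dvd hirr
      (by rw [hdegf]; exact_mod_cast (show n ≤ 2 * n by omega)) hdvd
    refine ⟨⟨y, hy⟩, Subtype.ext ?_⟩
    change AdjoinRoot.modByMonicHom hf.monic (AdjoinRoot.mk f y.1 / AdjoinRoot.mk f y.2) = u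
    rw [← (hdvd_iff (hmk hy.1.2.1 hy.1.2.2)).1 hdvd', AdjoinRoot.modByMonicHom_mk,
      modByMonic_eq_self_iff hf.monic, hdegf]
    exact hu

section Count

variable [Fintype F]

theorem card_degree_lt (m : ℕ) : Nat.card {p : F[X] // p.degree < m} = Fintype.card F ^ m := by
  rw [Nat.card_congr ((Equiv.subtypeEquivRight fun _ => mem_degreeLT.symm).trans
    (degreeLTEquiv F m).toEquiv), Nat.card_fun, Nat.card_fin, Nat.card_eq_fintype_card]

instance (m : ℕ) : Finite {p : F[X] // p.degree < m} :=
  Nat.finite_of_card_ne_zero (by rw [card_degree_lt]; exact pow_ne_zero _ Fintype.card_ne_zero)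

theorem card_isMonicOfDegree (e : ℕ) :
    Nat.card {p : F[X] // IsMonicOfDegree p e} = Fintype.card F ^ e := by
  rw [← card_degree_lt e]
  exact (Nat.card_congr (Equiv.subtypeEquiv (Equiv.addLeft (X ^ e))
    fun _ => isMonicOfDegree_X_pow_add_iff.symm)).symm

theorem card_monic_degree_lt (m : ℕ) :
    Nat.card {p : F[X] // p.Monic ∧ p.degree < m} =
      ∑ e ∈ Finset.range m, Fintype.card F ^ e := by
  have : Finite {p : F[X] // p.Monic ∧ p.degree < m} :=
    Finite.of_injective (fun p => (⟨p.1, p.2.2⟩ : {p : F[X] // p.degree < m}))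
      fun _ _ h => Subtype.ext (congrArg Subtype.val h :)
  rw [Nat.card_subtype_eq_sum_card_fiber natDegree
    fun p hp => (natDegree_lt_iff_degree_lt hp.1.ne_zero).2 hp.2]
  refine Finset.sum_congr rfl fun e he => ?_
  rw [← card_isMonicOfDegree]
  refine Nat.card_congr (Equiv.subtypeEquivRight fun p => ?_)
  rw [isMonicOfDegree_iff']
  constructor
  · exact fun ⟨⟨hp, _⟩, hd⟩ => ⟨hd, hp⟩
  · rintro ⟨hd, hp⟩
    refine ⟨⟨hp, ?_⟩, hd⟩
    rw [degree_eq_natDegree hp.ne_zero, hd]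
    exact_mod_cast Finset.mem_range.1 he

instance (m : ℕ) : Finite {x : F[X] × F[X] // IsFraction m x} :=
  Finite.of_injective (fun x => ((⟨x.1.1, x.2.1⟩ : {p : F[X] // p.degree < m}),
    (⟨x.1.2, x.2.2.2⟩ : {p : F[X] // p.degree < m})))
    fun _ _ h => Subtype.ext (Prod.ext (congrArg (·.1.1) h :) (congrArg (·.2.1) h :))

theorem card_isFraction (m : ℕ) :
    Nat.card {x : F[X] × F[X] // IsFraction m x} =
      Fintype.card F ^ m * ∑ e ∈ Finset.range m, Fintype.card F ^ e := by
  rw [← card_degree_lt, ← card_monic_degree_lt, ← Nat.card_prod]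
  exact Nat.card_congr (Equiv.subtypeProdEquivProd (p := fun r : F[X] => r.degree < m)
    (q := fun p : F[X] => p.Monic ∧ p.degree < m))

theorem card_isFraction_gcd_natDegree_eq [DecidableEq F] {m e : ℕ} (he : e ≤ m) :
    Nat.card {x : F[X] × F[X] // IsFraction m x ∧ (gcd x.1 x.2).natDegree = e} =
      Fintype.card F ^ e * Nat.card {x : F[X] × F[X] // IsReducedFraction (m - e) x} := by
  rw [← card_isMonicOfDegree, ← Nat.card_prod]
  symm
  refine Nat.card_eq_of_bijective (fun y => ⟨(y.1.1 * y.2.1.1, y.1.1 * y.2.1.2),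
    ⟨(y.1.2.degree_mul_lt_iff he).2 y.2.2.1.1, y.1.2.monic.mul y.2.2.1.2.1,
      (y.1.2.degree_mul_lt_iff he).2 y.2.2.1.2.2⟩,
    by rw [y.1.2.monic.gcd_mul_of_isCoprime y.2.2.2, y.1.2.natDegree_eq]⟩) ⟨?_, ?_⟩
  · rintro ⟨⟨g, hg⟩, ⟨⟨r, p⟩, hrp⟩⟩ ⟨⟨g', hg'⟩, ⟨⟨r', p'⟩, hrp'⟩⟩ h
    simp only [Subtype.mk.injEq, Prod.mk.injEq] at h
    obtain rfl : g = g' := by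
      rw [← hg.monic.gcd_mul_of_isCoprime hrp.2, ← hg'.monic.gcd_mul_of_isCoprime hrp'.2, h.1,
        h.2]
    simp only [mul_right_injective₀ hg.ne_zero |>.eq_iff] at h
    obtain ⟨rfl, rfl⟩ := h
    rfl
  · rintro ⟨⟨r, p⟩, ⟨hr, hp, hpd⟩, hgcd⟩
    dsimp only at hr hp hpd hgcd
    obtain ⟨r', p', hr', hp', hcop, hpm'⟩ := hp.exists_eq_gcd_mul_isCoprime (r := r)
    have hg : IsMonicOfDegree (gcd r p) e := ⟨hgcd, monic_gcd hp.ne_zero⟩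
    rw [hr'] at hr
    rw [hp'] at hpd
    exact ⟨⟨⟨gcd r p, hg⟩, ⟨(r', p'), ⟨(hg.degree_mul_lt_iff he).1 hr, hpm',
      (hg.degree_mul_lt_iff he).1 hpd⟩, hcop⟩⟩, Subtype.ext (Prod.ext hr'.symm hp'.symm)⟩

theorem sum_card_isReducedFraction (m : ℕ) :
    ∑ e ∈ Finset.range m,
        Fintype.card F ^ e * Nat.card {x : F[X] × F[X] // IsReducedFraction (m - e) x} =
      Fintype.card F ^ m * ∑ e ∈ Finset.range m, Fintype.card F ^ e := by
  classical
  rw [← card_isFraction, Nat.card_subtype_eq_sum_card_fiber (fun x => (gcd x.1 x.2).natDegree)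
    fun x ⟨_, hp, hpm⟩ => (natDegree_le_of_dvd (gcd_dvd_right _ _) hp.ne_zero).trans_lt
      ((natDegree_lt_iff_degree_lt hp.ne_zero).2 hpm)]
  exact Finset.sum_congr rfl fun e he =>
    (card_isFraction_gcd_natDegree_eq (Finset.mem_range.1 he).le).symm

theorem card_isReducedFraction {m : ℕ} (hm : 0 < m) :
    Nat.card {x : F[X] × F[X] // IsReducedFraction m x} = Fintype.card F ^ (2 * m - 1) := by
  induction m using Nat.strong_induction_on with
  | _ m ih =>
  obtain ⟨k, rfl⟩ := Nat.exists_eq_add_one_of_ne_zero hm.ne'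
  have hsum := sum_card_isReducedFraction (F := F) (k + 1)
  have hshift : ∑ e ∈ Finset.range k,
      Fintype.card F ^ (e + 1) *
        Nat.card {x : F[X] × F[X] // IsReducedFraction (k + 1 - (e + 1)) x} =
      ∑ e ∈ Finset.range k, Fintype.card F ^ (k + 1 + e) := by
    rw [← Finset.sum_range_reflect]
    refine Finset.sum_congr rfl fun e he => ?_
    have he := Finset.mem_range.1 he
    rw [ih _ (by omega) (by omega), ← pow_add]
    congr 1
    omega
  rw [Finset.sum_range_succ', hshift, Finset.mul_sum, Finset.sum_range_succ, Nat.sub_zero,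
    pow_zero, one_mul] at hsum
  simp only [← pow_add] at hsum
  rw [show 2 * (k + 1) - 1 = k + 1 + k by omega]
  omega


theorem bijective_toeplitzOf_coeff_zero (hn : 0 < n) :
    Function.Bijective fun u : {u : F[X] // u.degree < ↑(2 * n)} =>
      ((⟨toeplitzOf n u.1, isToeplitz_toeplitzOf u.1⟩ : {A // IsToeplitz A}), u.1.coeff 0) := by
  refine (Nat.bijective_iff_injective_and_card _).2 ⟨?_, ?_⟩
  · rintro ⟨u, hu⟩ ⟨v, hv⟩ h
    simp only [Prod.mk.injEq, Subtype.mk.injEq] at h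
    refine Subtype.ext (Polynomial.ext fun k => ?_)
    rcases Nat.eq_zero_or_pos k with rfl | hk
    · exact h.2
    by_cases hk' : k < 2 * n
    · have := congrFun (congrFun h.1 ⟨k - n, by omega⟩) ⟨n - k, by omega⟩
      simp only [toeplitzOf, Matrix.of_apply] at this
      rwa [show n + (k - n) - (n - k) = k by omega] at this
    · have h2n : ((2 * n : ℕ) : WithBot ℕ) ≤ k := by exact_mod_cast not_lt.1 hk'
      rw [coeff_eq_zero_of_degree_lt (hu.trans_le h2n),
        coeff_eq_zero_of_degree_lt (hv.trans_le h2n)]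
  · rw [Nat.card_prod, card_degree_lt, card_isToeplitz, Nat.card_eq_fintype_card, ← pow_succ]
    congr 1
    omega

theorem card_degree_lt_toeplitzOf (hn : 0 < n) (P : Matrix (Fin n) (Fin n) F → Prop) :
    Nat.card {u : F[X] // u.degree < ↑(2 * n) ∧ P (toeplitzOf n u)} =
      Nat.card {A // IsToeplitz A ∧ P A} * Fintype.card F := by
  calc Nat.card {u : F[X] // u.degree < ↑(2 * n) ∧ P (toeplitzOf n u)}
      = Nat.card {x : {u : F[X] // u.degree < ↑(2 * n)} // P (toeplitzOf n x.1)} :=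
        (Nat.card_congr (Equiv.subtypeSubtypeEquivSubtypeInter _ _)).symm
    _ = Nat.card {y : {A // IsToeplitz A} × F // P y.1.1} :=
        Nat.card_congr (Equiv.subtypeEquiv
          (Equiv.ofBijective _ (bijective_toeplitzOf_coeff_zero hn)) fun _ => Iff.rfl)
    _ = Nat.card {A // IsToeplitz A ∧ P A} * Fintype.card F := by
      rw [Nat.card_congr (Equiv.prodSubtypeFstEquivSubtypeProd
          (p := fun A : {A // IsToeplitz A} => P A.1)), Nat.card_prod,
        Nat.card_congr (Equiv.subtypeSubtypeEquivSubtypeInter _ _),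
        Nat.card_eq_fintype_card (α := F)]

theorem card_not_isUnit_isToeplitz (hn : 0 < n) {a b : F}
    (hirr : Irreducible (X ^ (2 * n) - C a * X - C b)) :
    Nat.card {A : Matrix (Fin n) (Fin n) F // IsToeplitz A ∧ ¬IsUnit A} =
      Fintype.card F ^ (2 * n - 2) := by
  have hf := isMonicOfDegree_trinomial hn a b
  have h := card_degree_lt_toeplitzOf hn (¬IsUnit · : Matrix (Fin n) (Fin n) F → Prop)
  rw [Nat.card_congr (Equiv.subtypeEquivRight fun u => and_congr_right fun hu =>
      not_isUnit_toeplitzOf_iff_exists_isFraction hf (hasCoeffGap_trinomial a b) hu),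
    card_exists_isFraction_dvd hf hirr, card_isReducedFraction hn,
    show 2 * n - 1 = 2 * n - 2 + 1 by omega, pow_succ] at h
  exact (Nat.eq_of_mul_eq_mul_right Fintype.card_pos h).symm

end Count

end ToeplitzCount

open ToeplitzCount in
/-- If X^{2n} - aX - b is irreducible over F_q for some a,b, then the
number of nonsingular n×n Toeplitz matrices over F_q is q^{2n-1} - q^{2n-2}. -/
theorem stmt_17 (F : Type*) [Field F] [Fintype F] (q : ℕ) (hq : q = Fintype.card F)
    (n : ℕ) (hn : 0 < n)
    (h : ∃ a b : F, Irreducible (X ^ (2 * n) - C a * X - C b)) :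
    Nat.card {A : Matrix (Fin n) (Fin n) F //
        (∀ i j r s : Fin n, (i : ℤ) - (j : ℤ) = (r : ℤ) - (s : ℤ) → A i j = A r s) ∧
        IsUnit A} =
      q ^ (2 * n - 1) - q ^ (2 * n - 2) := by
  classical
  obtain ⟨a, b, hirr⟩ := h
  have htotal := card_isToeplitz (R := F) n
  rw [← Nat.card_congr (Equiv.sumCompl fun A : {A // IsToeplitz A} => IsUnit A.1), Nat.card_sum,
    Nat.card_congr (Equiv.subtypeSubtypeEquivSubtypeInter IsToeplitz IsUnit),
    Nat.card_congr (Equiv.subtypeSubtypeEquivSubtypeInter IsToeplitz (¬IsUnit ·)),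
    card_not_isUnit_isToeplitz hn hirr] at htotal
  subst hq
  change Nat.card {A // IsToeplitz A ∧ IsUnit A} = _
  omega
end

section
/- Let q be a power of an odd prime such that q is not a Fermat prime (i.e., q - 1 has an odd prime factor greater than 1). Then there are infinitely many positive integers n such that X^{2n} - b is irreducible in F_q[X] for some b ∈ F_q. -/
open Polynomial IntermediateField

section Aux

universe u

/-- If `-1` is a square in `K` and `a` is a nonsquare, then `X ^ 2^k - a` is irreducible. -/
lemma aux_two_pow {K : Type u} [Field K] (hneg : IsSquare (-1 : K)) {a : K}
    (ha : ∀ b : K, b ^ 2 ≠ a) (k : ℕ) : Irreducible (X ^ (2 ^ k) - C a) := by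
  induction k generalizing K a with
  | zero => simpa using irreducible_X_sub_C a
  | succ k IH =>
    rw [pow_succ]
    apply X_pow_mul_sub_C_irreducible (X_pow_sub_C_irreducible_of_prime Nat.prime_two ha)
    intro E _ _ x hx
    have hint : IsIntegral K x := not_not.mp fun h ↦ by
      simpa only [degree_zero, degree_X_pow_sub_C (by norm_num : 0 < 2),
        WithBot.natCast_ne_bot] using congr_arg degree (hx.symm.trans (dif_neg h))
    have hneg' : IsSquare (-1 : K⟮x⟯) := by
      obtain ⟨c, hc⟩ := hneg
      exact ⟨algebraMap K K⟮x⟯ c, by rw [← map_mul, ← hc, map_neg, map_one]⟩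
    apply IH hneg'
    intro y hy
    have hnorm : Algebra.norm K (IntermediateField.AdjoinSimple.gen K x) = -a := by
      rw [← IntermediateField.adjoin.powerBasis_gen hint,
        Algebra.PowerBasis.norm_gen_eq_coeff_zero_minpoly]
      simp [IntermediateField.minpoly_gen, hx]
    obtain ⟨c, hc⟩ := hneg
    apply ha (c * Algebra.norm K y)
    have : (Algebra.norm K y) ^ 2 = -a := by rw [← hnorm, ← map_pow, hy]
    calc (c * Algebra.norm K y) ^ 2 = (c * c) * (Algebra.norm K y) ^ 2 := by ring
    _ = a := by rw [← hc, this]; ring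

/-- If `p` is an odd prime and `a` is neither a square nor a `p`-th power,
then `X ^ (2 * p^k) - a` is irreducible. -/
lemma aux_two_mul_pow {K : Type u} [Field K] {p : ℕ} (hp : p.Prime) (hp2 : p ≠ 2) {a : K}
    (ha2 : ∀ b : K, b ^ 2 ≠ a) (hap : ∀ b : K, b ^ p ≠ a) (k : ℕ) :
    Irreducible (X ^ (2 * p ^ k) - C a) := by
  apply X_pow_mul_sub_C_irreducible (X_pow_sub_C_irreducible_of_prime_pow hp hp2 k hap)
  intro E _ _ x hx
  have hpk : 0 < p ^ k := pow_pos hp.pos k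
  have hint : IsIntegral K x := not_not.mp fun h ↦ by
    simpa only [degree_zero, degree_X_pow_sub_C hpk,
      WithBot.natCast_ne_bot] using congr_arg degree (hx.symm.trans (dif_neg h))
  apply X_pow_sub_C_irreducible_of_prime Nat.prime_two
  intro y hy
  have hodd : Odd (p ^ k) := (hp.odd_of_ne_two hp2).pow
  have hnorm : Algebra.norm K (IntermediateField.AdjoinSimple.gen K x) = a := by
    rw [← IntermediateField.adjoin.powerBasis_gen hint,
      Algebra.PowerBasis.norm_gen_eq_coeff_zero_minpoly]
    simp [IntermediateField.minpoly_gen, hx, hpk.ne', hpk.ne, hodd.neg_pow]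
  apply ha2 (Algebra.norm K y)
  rw [← hnorm, ← map_pow, hy]

/-- A generator of the units of a finite field is not a `d`-th power for `d ∣ q - 1`, `d ≥ 2`. -/
lemma aux_gen_not_pow {K : Type u} [Field K] [Fintype K] (ζ : Kˣ)
    (hζ : ∀ x : Kˣ, x ∈ Subgroup.zpowers ζ) {d : ℕ} (hd : 2 ≤ d)
    (hdvd : d ∣ Fintype.card K - 1) : ∀ b : K, b ^ d ≠ (ζ : K) := by
  classical
  intro b hb
  have hb0 : b ≠ 0 := by
    intro h
    rw [h, zero_pow (by omega)] at hb
    exact ζ.ne_zero hb.symm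
  lift b to Kˣ using isUnit_iff_ne_zero.mpr hb0
  have hbu : b ^ d = ζ := Units.ext (by simpa using hb)
  have horder : orderOf ζ = Fintype.card K - 1 := by
    rw [orderOf_eq_card_of_forall_mem_zpowers hζ, Nat.card_eq_fintype_card, Fintype.card_units]
  have hcard : 0 < Fintype.card K - 1 := by
    have := Fintype.one_lt_card (α := K)
    omega
  obtain ⟨m, hm⟩ := hdvd
  have hm0 : 0 < m := by
    rcases Nat.eq_zero_or_pos m with rfl | h
    · simp at hm; omega
    · exact h
  have h1 : ζ ^ m = 1 := by
    rw [← hbu, ← pow_mul, ← hm, ← Fintype.card_units, pow_card_eq_one]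
  have hdvd' := orderOf_dvd_of_pow_eq_one h1
  rw [horder] at hdvd'
  have hle := Nat.le_of_dvd hm0 hdvd'
  have h2m : 2 * m ≤ d * m := Nat.mul_le_mul_right m hd
  omega

end Aux

/-- If q is a power of an odd prime and q is not a Fermat prime, then
there are infinitely many positive integers n such that X^{2n} - b is irreducible
over F_q for some b ∈ F_q. -/
theorem stmt_18 (F : Type*) [Field F] [Fintype F] (q : ℕ) (hq : q = Fintype.card F)
    (hodd : ringChar F ≠ 2)
    (hfermat : ¬(Nat.Prime q ∧ ∃ k : ℕ, q = 2 ^ k + 1)) :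
    {n : ℕ | 0 < n ∧ ∃ b : F, Irreducible (X ^ (2 * n) - C b)}.Infinite := by
  obtain ⟨ζ, hζ⟩ := IsCyclic.exists_generator (α := Fˣ)
  have hq2 : Fintype.card F % 2 = 1 := FiniteField.odd_card_of_char_ne_two hodd
  have hcard2 : 2 ≤ Fintype.card F := Fintype.one_lt_card
  have h2dvd : 2 ∣ Fintype.card F - 1 := by omega
  have hsq : ∀ b : F, b ^ 2 ≠ (ζ : F) := aux_gen_not_pow ζ hζ le_rfl h2dvd
  rcases Nat.even_or_odd ((Fintype.card F - 1) / 2) with heven | hoddhalf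
  · -- q ≡ 1 (mod 4): use n = 2^k
    have hq4 : Fintype.card F % 4 = 1 := by
      obtain ⟨t, ht⟩ := heven
      omega
    have hneg : IsSquare (-1 : F) := FiniteField.isSquare_neg_one_iff.mpr (by omega)
    apply Set.infinite_of_injective_forall_mem
      (f := fun k : ℕ => 2 ^ k) (Nat.pow_right_injective le_rfl)
    intro k
    refine ⟨pow_pos (by norm_num) k, (ζ : F), ?_⟩
    have : 2 * 2 ^ k = 2 ^ (k + 1) := by rw [pow_succ, mul_comm]
    rw [this]
    exact aux_two_pow hneg hsq (k + 1)
  · -- q ≡ 3 (mod 4): there is an odd prime p ∣ q - 1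
    have hq4 : Fintype.card F % 4 = 3 := by
      obtain ⟨t, ht⟩ := hoddhalf
      omega
    obtain ⟨p, hp, hpdvd, hpodd⟩ :
        ∃ p, Nat.Prime p ∧ p ∣ Fintype.card F - 1 ∧ Odd p := by
      rcases (Fintype.card F - 1).eq_two_pow_or_exists_odd_prime_and_dvd with ⟨j, hj⟩ | h
      · exfalso
        have hj1 : j = 1 := by
          rcases j with _ | _ | j
          · simp at hj; omega
          · rfl
          · exfalso
            have : 4 ∣ 2 ^ (j + 2) := ⟨2 ^ j, by ring⟩
            omega
        have hq3 : q = 3 := by rw [hj1, pow_one] at hj; omega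
        exact hfermat ⟨hq3 ▸ Nat.prime_three, 1, by omega⟩
      · exact h
    have hp2 : p ≠ 2 := by rintro rfl; simp [Nat.odd_iff] at hpodd
    have hpow : ∀ b : F, b ^ p ≠ (ζ : F) :=
      aux_gen_not_pow ζ hζ hp.two_le hpdvd
    apply Set.infinite_of_injective_forall_mem
      (f := fun k : ℕ => p ^ k) (Nat.pow_right_injective hp.two_le)
    intro k
    exact ⟨pow_pos hp.pos k, (ζ : F), aux_two_mul_pow hp hp2 hsq hpow k⟩
end
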